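/- arXiv:2504.01834 — 11 statements merged into one kernel-verified Lean document; each statement's English description precedes it below -/
import Mathlib

section
/- Let G ∈ W(k)[X₁,…,Xₘ] be a polynomial with Witt vector coefficients and let π(G) ∈ k[X₁,…,Xₘ] be its reduction. Then for every n ≥ 1, the Teichmüller lift [π(G)^{p^{n−1}}] ∈ W(k[X₁,…,Xₘ]) is congruent to ε(G)^{p^{n−1}} modulo the image of V^n; that is, [π(G)^{p^{n−1}}] − ε(G)^{p^{n−1}} lies in V^n(W(k[X₁,…,Xₘ])). -/
/-!
The Teichmüller lift `[π G]` and `ε G` have the same 0-th Witt coordinate, so they agree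
modulo `V W`. In characteristic `p` the ideals `Iⱼ = V^j W = ker (truncate j)` satisfy
`p ∈ I₁` and `Iᵢ Iⱼ ⊆ I_{i+j}`; writing `x = y + d` with `d ∈ Iⱼ`, `j ≥ 1`, the binomial
expansion `x^p - y^p = p y^{p-1} d + d² t` then shows `x^p ≡ y^p mod I_{j+1}`. Raising to
the `p`-th power `n - 1` times improves the congruence from `V W` to `V^n W`.
-/

noncomputable section

/-- The ring homomorphism `π : W(k)[X₁,…,Xₘ] → k[X₁,…,Xₘ]` reducing each coefficient
to its 0-th Witt coordinate. -/
def wittPi (p : ℕ) [Fact p.Prime] (m : ℕ) (k : Type*) [CommRing k] :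
    MvPolynomial (Fin m) (WittVector p k) →+* MvPolynomial (Fin m) k :=
  MvPolynomial.map (WittVector.constantCoeff)

/-- The ring homomorphism `ε : W(k)[X₁,…,Xₘ] → W(k[X₁,…,Xₘ])` which on `W(k)` is
induced by functoriality of `W` from the inclusion `k → k[X₁,…,Xₘ]` and sends each
`Xᵢ` to the Teichmüller lift `[Xᵢ]`. -/
def wittEps (p : ℕ) [Fact p.Prime] (m : ℕ) (k : Type*) [CommRing k] :
    MvPolynomial (Fin m) (WittVector p k) →+* WittVector p (MvPolynomial (Fin m) k) :=
  MvPolynomial.eval₂Hom (WittVector.map (MvPolynomial.C))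
    (fun i => WittVector.teichmuller p (MvPolynomial.X i))

namespace WittVector

variable {p : ℕ} [Fact p.Prime] {R : Type*} [CommRing R]

theorem mem_ker_truncate_iff_exists_iterate_verschiebung {n : ℕ} {x : WittVector p R} :
    x ∈ RingHom.ker (truncate (p := p) n) ↔ ∃ z, x = verschiebung^[n] z := by
  rw [mem_ker_truncate]
  constructor
  · intro h
    exact ⟨x.shift n, eq_iterate_verschiebung h⟩
  · rintro ⟨z, rfl⟩ i hi
    exact iterate_verschiebung_coeff_eq_zero z hi

theorem ker_truncate_antitone : Antitone fun n ↦ RingHom.ker (truncate (p := p) (R := R) n) :=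
  fun _ _ hmn x hx ↦
    (mem_ker_truncate _ x).2 fun i hi ↦ (mem_ker_truncate _ x).1 hx i (hi.trans_le hmn)

theorem sub_mem_ker_truncate_one_of_coeff_zero_eq {x y : WittVector p R}
    (h : x.coeff 0 = y.coeff 0) :
    x - y ∈ RingHom.ker (truncate (p := p) 1) := by
  refine (mem_ker_truncate _ _).2 fun i hi ↦ ?_
  obtain rfl : i = 0 := Nat.lt_one_iff.1 hi
  change constantCoeff (x - y) = 0
  rw [map_sub, constantCoeff_apply, constantCoeff_apply, h, sub_self]

variable [CharP R p]

theorem mul_mem_ker_truncate_add {i j : ℕ} {x y : WittVector p R}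
    (hx : x ∈ RingHom.ker (truncate (p := p) i)) (hy : y ∈ RingHom.ker (truncate (p := p) j)) :
    x * y ∈ RingHom.ker (truncate (p := p) (i + j)) := by
  obtain ⟨a, rfl⟩ := mem_ker_truncate_iff_exists_iterate_verschiebung.1 hx
  obtain ⟨b, rfl⟩ := mem_ker_truncate_iff_exists_iterate_verschiebung.1 hy
  rw [iterate_verschiebung_mul]
  exact mem_ker_truncate_iff_exists_iterate_verschiebung.2 ⟨_, rfl⟩

theorem natCast_mem_ker_truncate_one :
    (p : WittVector p R) ∈ RingHom.ker (truncate (p := p) 1) := by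
  refine (mem_ker_truncate _ _).2 fun i hi ↦ ?_
  obtain rfl : i = 0 := Nat.lt_one_iff.1 hi
  change constantCoeff (p : WittVector p R) = 0
  rw [map_natCast, CharP.cast_eq_zero]

theorem sub_pow_char_mem_ker_truncate_succ {j : ℕ} (hj : 1 ≤ j) {x y : WittVector p R}
    (h : x - y ∈ RingHom.ker (truncate (p := p) j)) :
    x ^ p - y ^ p ∈ RingHom.ker (truncate (p := p) (j + 1)) := by
  obtain ⟨t, ht⟩ := sq_dvd_add_pow_sub_sub (x - y) y p
  have hexpand : x ^ p - y ^ p = p * ((x - y) * y ^ (p - 1)) + (x - y) * (x - y) * t := by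
    rw [add_sub_cancel] at ht
    linear_combination ht
  rw [hexpand, add_comm j 1]
  refine Ideal.add_mem _ ?_ (Ideal.mul_mem_right _ _ ?_)
  · exact mul_mem_ker_truncate_add natCast_mem_ker_truncate_one (Ideal.mul_mem_right _ _ h)
  · exact ker_truncate_antitone (by omega) (mul_mem_ker_truncate_add h h)

theorem sub_pow_char_pow_mem_ker_truncate_add {j : ℕ} (hj : 1 ≤ j) {x y : WittVector p R}
    (h : x - y ∈ RingHom.ker (truncate (p := p) j)) (i : ℕ) :
    x ^ p ^ i - y ^ p ^ i ∈ RingHom.ker (truncate (p := p) (j + i)) := by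
  induction i with
  | zero => simpa using h
  | succ i ih =>
    rw [pow_succ, pow_mul, pow_mul, ← add_assoc]
    exact sub_pow_char_mem_ker_truncate_succ (by omega) ih

end WittVector

open WittVector

theorem coeff_zero_wittEps {p : ℕ} [Fact p.Prime] {m : ℕ} {k : Type*} [CommRing k]
    (G : MvPolynomial (Fin m) (WittVector p k)) :
    (wittEps p m k G).coeff 0 = wittPi p m k G := by
  change (constantCoeff.comp (wittEps p m k)) G = wittPi p m k G
  congr 1
  refine MvPolynomial.ringHom_ext (fun w ↦ ?_) (fun i ↦ ?_) <;>
    simp [wittEps, wittPi, constantCoeff_apply]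

theorem stmt0_general (p m : ℕ) [Fact p.Prime]
    (k : Type*) [CommRing k] [CharP k p]
    (G : MvPolynomial (Fin m) (WittVector p k)) (n : ℕ) (hn : 1 ≤ n) :
    ∃ y : WittVector p (MvPolynomial (Fin m) k),
      WittVector.teichmuller p ((wittPi p m k G) ^ p ^ (n - 1))
          - (wittEps p m k G) ^ p ^ (n - 1)
        = (⇑(WittVector.verschiebung (p := p)))^[n] y := by
  have hbase : teichmuller p (wittPi p m k G) - wittEps p m k G ∈
      RingHom.ker (truncate (p := p) 1) :=
    sub_mem_ker_truncate_one_of_coeff_zero_eq (by rw [teichmuller_coeff_zero, coeff_zero_wittEps])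
  have hpow := sub_pow_char_pow_mem_ker_truncate_add le_rfl hbase (n - 1)
  rw [← map_pow, Nat.add_sub_cancel' hn] at hpow
  exact mem_ker_truncate_iff_exists_iterate_verschiebung.1 hpow

theorem stmt0 (p m : ℕ) [Fact p.Prime] (hm : 1 ≤ m)
    (k : Type*) [CommRing k] [IsReduced k] [CharP k p]
    (G : MvPolynomial (Fin m) (WittVector p k)) (n : ℕ) (hn : 1 ≤ n) :
    ∃ y : WittVector p (MvPolynomial (Fin m) k),
      WittVector.teichmuller p ((wittPi p m k G) ^ p ^ (n - 1))
          - (wittEps p m k G) ^ p ^ (n - 1)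
        = (⇑(WittVector.verschiebung (p := p)))^[n] y :=
  stmt0_general p m k G n hn
end
end

section
/- Let w ∈ W(k[X₁,…,Xₘ]) and let G₀,…,G_{n−1} ∈ W(k)[X₁,…,Xₘ] be polynomials with π(G_i) = w_i for every i ∈ {0,…,n−1}. Then F^{n−1}(w) − Σ_{i=0}^{n−1} p^i ε(G_i)^{p^{n−1−i}} lies in V^n(W(k[X₁,…,Xₘ])); in other words, in length-n truncated Witt vectors, F^{n−1}(w) equals Σ_{i=0}^{n−1} p^i ε(G_i)^{p^{n−1−i}}, independently of the chosen lifts G_i. -/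
noncomputable section

namespace WittAux

open WittVector Finset Function

set_option linter.unusedSectionVars false

variable {p : ℕ} [hp : Fact p.Prime] {R : Type*} [CommRing R]

local notation "𝕎" => WittVector p

/-- `x` vanishes in the first `j` Witt coordinates. -/
def Z (j : ℕ) (x : 𝕎 R) : Prop := ∀ i < j, x.coeff i = 0

theorem Z_iff_mem_ker {j : ℕ} {x : 𝕎 R} :
    Z j x ↔ x ∈ RingHom.ker (WittVector.truncate (p := p) j) :=
  (WittVector.mem_ker_truncate j x).symm

theorem Z.add {j} {x y : 𝕎 R} (hx : Z j x) (hy : Z j y) : Z j (x + y) := by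
  rw [Z_iff_mem_ker] at *; exact add_mem hx hy

theorem Z.neg {j} {x : 𝕎 R} (hx : Z j x) : Z j (-x) := by
  rw [Z_iff_mem_ker] at *; exact neg_mem hx

theorem Z.mul_right {j} {x : 𝕎 R} (hx : Z j x) (y : 𝕎 R) : Z j (x * y) := by
  rw [Z_iff_mem_ker] at *; exact Ideal.mul_mem_right _ _ hx

theorem Z.mono {j j'} (h : j' ≤ j) {x : 𝕎 R} (hx : Z j x) : Z j' x :=
  fun i hi => hx i (lt_of_lt_of_le hi h)

theorem Z.sum {j} {ι : Type*} {s : Finset ι} {f : ι → 𝕎 R} (h : ∀ i ∈ s, Z j (f i)) :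
    Z j (∑ i ∈ s, f i) := by
  rw [Z_iff_mem_ker]
  exact Ideal.sum_mem _ (fun i hi => Z_iff_mem_ker.mp (h i hi))

theorem Z_sub_iff {j} {x y : 𝕎 R} : Z j (x - y) ↔ ∀ i < j, x.coeff i = y.coeff i := by
  rw [Z_iff_mem_ker, RingHom.mem_ker, map_sub, sub_eq_zero]
  constructor
  · intro h i hi
    have := congrArg (fun t => TruncatedWittVector.coeff (⟨i, hi⟩ : Fin j) t) h
    simpa [WittVector.coeff_truncate] using this
  · intro h
    ext ⟨i, hi⟩
    simp [WittVector.coeff_truncate, h i hi]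

theorem Z_iterate_verschiebung (s : ℕ) (x : 𝕎 R) : Z s (verschiebung^[s] x) := by
  induction s generalizing x with
  | zero => intro i hi; omega
  | succ s ih =>
    intro i hi
    rw [Function.iterate_succ_apply']
    cases i with
    | zero => rw [verschiebung_coeff_zero]
    | succ i => rw [verschiebung_coeff_succ]; exact ih x i (by omega)

theorem Z.exists_eq {j} {x : 𝕎 R} (hx : Z j x) : ∃ z, x = verschiebung^[j] z :=
  ⟨_, eq_iterate_verschiebung hx⟩

section CharP

variable [CharP R p]

theorem Z.mul_p {j} {x : 𝕎 R} (hx : Z j x) : Z (j + 1) (x * (p : 𝕎 R)) := by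
  intro i hi
  cases i with
  | zero => exact mul_charP_coeff_zero x
  | succ i =>
    rw [mul_charP_coeff_succ, hx i (by omega), zero_pow hp.out.ne_zero]

theorem Z.mul_p_pow {j} {x : 𝕎 R} (hx : Z j x) (t : ℕ) : Z (j + t) (x * (p : 𝕎 R) ^ t) := by
  induction t with
  | zero => simpa only [pow_zero, mul_one, Nat.add_zero] using hx
  | succ t ih =>
    have h1 : x * (p : 𝕎 R) ^ (t + 1) = (x * (p : 𝕎 R) ^ t) * (p : 𝕎 R) := by ring
    rw [h1, show j + (t + 1) = j + t + 1 from rfl]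
    exact ih.mul_p

theorem Z.mul_self' {j} {x y : 𝕎 R} (hx : Z j x) (hy : Z j y) : Z (j + j) (x * y) := by
  obtain ⟨a, rfl⟩ := hx.exists_eq
  obtain ⟨b, rfl⟩ := hy.exists_eq
  rw [iterate_verschiebung_mul]
  exact Z_iterate_verschiebung _ _

theorem Z.frobenius' {j} {x : 𝕎 R} (hx : Z j x) : Z j (frobenius x) := by
  intro i hi
  rw [coeff_frobenius_charP, hx i hi, zero_pow hp.out.ne_zero]

theorem Z.iterate_frobenius' {j} {x : 𝕎 R} (hx : Z j x) (t : ℕ) : Z j (frobenius^[t] x) := by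
  induction t with
  | zero => simpa using hx
  | succ t ih => rw [Function.iterate_succ_apply']; exact ih.frobenius'

theorem Z.pow_p {j} (hj : 1 ≤ j) {x y : 𝕎 R} (h : Z j (x - y)) :
    Z (j + 1) (x ^ p - y ^ p) := by
  set c := x - y with hc
  have hx : x = y + c := by ring
  have expand := add_pow_prime_eq hp.out y c
  have key : x ^ p - y ^ p =
      c ^ p + (∑ k ∈ Finset.Ioo 0 p, y ^ k * c ^ (p - k) * ↑(p.choose k / p)) * p := by
    rw [hx, expand]
    have hs : ∑ k ∈ Finset.Ioo 0 p, y ^ k * c ^ (p - k) * ↑(p.choose k / p)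
        = y * c * ∑ k ∈ Finset.Ioo 0 p, y ^ (k - 1) * c ^ (p - k - 1) * ↑(p.choose k / p) := by
      rw [Finset.mul_sum]
      apply Finset.sum_congr rfl
      intro k hk
      have hk' : 0 < k ∧ k < p := by simpa using hk
      obtain ⟨a, rfl⟩ : ∃ a, k = a + 1 := ⟨k - 1, by omega⟩
      obtain ⟨b, hb⟩ : ∃ b, p - (a + 1) = b + 1 := ⟨p - (a + 1) - 1, by omega⟩
      rw [hb, show a + 1 - 1 = a by omega, show b + 1 - 1 = b by omega]
      ring
    rw [hs]; ring
  rw [key]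
  apply Z.add
  · -- c ^ p
    have h2 : c ^ p = (c * c) * c ^ (p - 2) := by
      rw [← pow_two, ← pow_add]
      congr 1
      have := hp.out.two_le
      omega
    rw [h2]
    exact (((h.mul_self' h).mono (by omega)).mul_right _)
  · apply Z.mul_p
    apply Z.sum (j := j) (fun k hk => ?_)
    have hk' : 0 < k ∧ k < p := by simpa using hk
    obtain ⟨e, he⟩ : ∃ e, p - k = e + 1 := ⟨p - k - 1, by omega⟩
    have hterm : y ^ k * c ^ (p - k) * ↑(p.choose k / p)
        = c * (c ^ e * y ^ k * ↑(p.choose k / p)) := by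
      rw [he, pow_succ]; ring
    rw [hterm]
    exact h.mul_right _

theorem Z.pow_p_pow {j} (hj : 1 ≤ j) {x y : 𝕎 R} (h : Z j (x - y)) (t : ℕ) :
    Z (j + t) (x ^ p ^ t - y ^ p ^ t) := by
  induction t with
  | zero => simpa only [pow_zero, pow_one, Nat.add_zero] using h
  | succ t ih =>
    have hz : ∀ z : 𝕎 R, z ^ p ^ (t + 1) = (z ^ p ^ t) ^ p := by
      intro z; rw [← pow_mul, pow_succ]
    rw [hz, hz, show j + (t + 1) = j + t + 1 from rfl]
    exact Z.pow_p (by omega) ih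

theorem frobenius_teichmuller' (a : R) :
    frobenius (teichmuller p a) = teichmuller p (a ^ p) := by
  ext i
  cases i with
  | zero => rw [coeff_frobenius_charP, teichmuller_coeff_zero, teichmuller_coeff_zero]
  | succ i =>
    rw [coeff_frobenius_charP, teichmuller_coeff_pos _ _ _ (Nat.succ_pos i),
      teichmuller_coeff_pos _ _ _ (Nat.succ_pos i), zero_pow hp.out.ne_zero]

theorem iterate_frobenius_teichmuller (t : ℕ) (a : R) :
    frobenius^[t] (teichmuller p a) = teichmuller p (a ^ p ^ t) := by
  induction t with
  | zero => simp
  | succ t ih =>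
    rw [Function.iterate_succ_apply', ih, frobenius_teichmuller', ← pow_mul, pow_succ]

theorem iterate_frobenius_natCast (t : ℕ) (m : ℕ) :
    frobenius^[t] ((m : 𝕎 R)) = m := by
  induction t with
  | zero => simp
  | succ t ih => rw [Function.iterate_succ_apply, map_natCast (frobenius : 𝕎 R →+* 𝕎 R), ih]

theorem iterate_frobenius_verschiebung (s : ℕ) (z : 𝕎 R) :
    frobenius^[s] (verschiebung^[s] z) = z * (p : 𝕎 R) ^ s := by
  induction s with
  | zero => simp
  | succ s ih =>
    rw [Function.iterate_succ_apply' (f := verschiebung), Function.iterate_succ_apply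
      (f := frobenius), frobenius_verschiebung,
      iterate_map_mul (frobenius : 𝕎 R →+* 𝕎 R), ih, iterate_frobenius_natCast, pow_succ]
    ring

theorem coeff_iterate_verschiebung_teichmuller (i j : ℕ) (a : R) :
    (verschiebung^[i] (teichmuller p a)).coeff j = if j = i then a else 0 := by
  rcases lt_trichotomy j i with h | rfl | h
  · rw [if_neg h.ne, Z_iterate_verschiebung i _ j h]
  · rw [if_pos rfl]
    have := iterate_verschiebung_coeff (teichmuller p a) j 0
    simpa using this
  · rw [if_neg h.ne']
    obtain ⟨k, rfl⟩ : ∃ k, j = k + i := ⟨j - i, by omega⟩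
    rw [iterate_verschiebung_coeff]
    exact teichmuller_coeff_pos p a k (by omega)

theorem coeff_teichmuller_sum (x : 𝕎 R) (N j : ℕ) :
    (∑ i ∈ range N, verschiebung^[i] (teichmuller p (x.coeff i))).coeff j
      = if j < N then x.coeff j else 0 := by
  induction N generalizing j with
  | zero => simp
  | succ N ih =>
    rw [sum_range_succ, coeff_add_of_disjoint]
    · rw [ih, coeff_iterate_verschiebung_teichmuller]
      rcases lt_trichotomy j N with h | rfl | h
      · rw [if_pos h, if_neg h.ne, if_pos (by omega), add_zero]
      · rw [if_neg (lt_irrefl _), if_pos rfl, if_pos (by omega), zero_add]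
      · rw [if_neg (by omega), if_neg (by omega), if_neg (by omega), add_zero]
    · intro t
      rcases lt_or_ge t N with h | h
      · right
        rw [coeff_iterate_verschiebung_teichmuller, if_neg (by omega)]
      · left
        rw [ih, if_neg (by omega)]

theorem iterate_frobenius_sum {ι : Type*} (t : ℕ) (s : Finset ι) (f : ι → 𝕎 R) :
    frobenius^[t] (∑ i ∈ s, f i) = ∑ i ∈ s, frobenius^[t] (f i) := by
  induction t with
  | zero => simp
  | succ t ih =>
    rw [Function.iterate_succ_apply', ih, map_sum (frobenius : 𝕎 R →+* 𝕎 R)]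
    simp [Function.iterate_succ_apply']

end CharP

end WittAux

end

noncomputable section

open WittVector WittAux Finset in
theorem stmt1 (p m n : ℕ) [Fact p.Prime] (hm : 1 ≤ m) (hn : 1 ≤ n)
    (k : Type*) [CommRing k] [IsReduced k] [CharP k p]
    (w : WittVector p (MvPolynomial (Fin m) k))
    (G : ℕ → MvPolynomial (Fin m) (WittVector p k))
    (hG : ∀ i < n, wittPi p m k (G i) = w.coeff i) :
    ∃ y : WittVector p (MvPolynomial (Fin m) k),
      (⇑(WittVector.frobenius (p := p)))^[n - 1] w
          - ∑ i ∈ Finset.range n,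
              (p : WittVector p (MvPolynomial (Fin m) k)) ^ i
                * (wittEps p m k (G i)) ^ p ^ (n - 1 - i)
        = (⇑(WittVector.verschiebung (p := p)))^[n] y := by
  classical
  -- the 0-th coefficient of `ε G` is `π G`
  have heps : ∀ Gi, (wittEps p m k Gi).coeff 0 = wittPi p m k Gi := by
    have hcomp : (WittVector.constantCoeff).comp (wittEps p m k) = wittPi p m k := by
      apply MvPolynomial.ringHom_ext
      · intro a
        simp only [RingHom.comp_apply, wittEps, wittPi, MvPolynomial.eval₂Hom_C,
          MvPolynomial.map_C]
        ext
        simp [WittVector.map_coeff]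
      · intro i
        simp only [RingHom.comp_apply, wittEps, wittPi, MvPolynomial.eval₂Hom_X',
          MvPolynomial.map_X]
        ext
        simp [WittVector.teichmuller_coeff_zero]
    intro Gi
    exact congrArg (fun f => f Gi) hcomp
  set Wc : ℕ → WittVector p (MvPolynomial (Fin m) k) :=
    fun i => teichmuller p (w.coeff i) with hWc
  set mid1 : WittVector p (MvPolynomial (Fin m) k) :=
    ∑ i ∈ range n, (⇑verschiebung)^[i] (Wc i) with hmid1
  set mid2 : WittVector p (MvPolynomial (Fin m) k) :=
    ∑ i ∈ range n, (Wc i) ^ p ^ (n - 1 - i) * (p : WittVector p (MvPolynomial (Fin m) k)) ^ i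
    with hmid2
  have h1 : Z n (w - mid1) := by
    rw [Z_sub_iff]
    intro i hi
    rw [hmid1, hWc, coeff_teichmuller_sum, if_pos hi]
  have h3 : (⇑(frobenius (p := p)))^[n - 1] mid1 = mid2 := by
    rw [hmid1, iterate_frobenius_sum]
    apply Finset.sum_congr rfl
    intro i hi
    have hi' : i < n := Finset.mem_range.mp hi
    have hsplit : (⇑(frobenius (p := p)))^[n - 1] ((⇑verschiebung)^[i] (Wc i))
        = (⇑(frobenius (p := p)))^[n - 1 - i]
            ((⇑(frobenius (p := p)))^[i] ((⇑verschiebung)^[i] (Wc i))) := by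
      rw [← Function.iterate_add_apply]
      congr 2
      omega
    rw [hsplit, iterate_frobenius_verschiebung, hWc,
      iterate_map_mul (frobenius : WittVector p (MvPolynomial (Fin m) k) →+*
        WittVector p (MvPolynomial (Fin m) k)),
      iterate_frobenius_teichmuller,
      iterate_map_pow (frobenius : WittVector p (MvPolynomial (Fin m) k) →+*
        WittVector p (MvPolynomial (Fin m) k)),
      iterate_frobenius_natCast, map_pow]
  have h2 : Z n ((⇑(frobenius (p := p)))^[n - 1] w - mid2) := by
    have hh := (h1.iterate_frobenius' (n - 1))
    rw [iterate_map_sub (frobenius : WittVector p (MvPolynomial (Fin m) k) →+*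
      WittVector p (MvPolynomial (Fin m) k)), h3] at hh
    exact hh
  have h4 : ∀ i ∈ range n,
      Z n ((p : WittVector p (MvPolynomial (Fin m) k)) ^ i
            * (wittEps p m k (G i)) ^ p ^ (n - 1 - i)
        - (Wc i) ^ p ^ (n - 1 - i) * (p : WittVector p (MvPolynomial (Fin m) k)) ^ i) := by
    intro i hi
    have hi' : i < n := Finset.mem_range.mp hi
    have base : Z 1 (wittEps p m k (G i) - Wc i) := by
      rw [Z_sub_iff]
      intro i' hi''
      interval_cases i'
      rw [heps, hG i (by omega), hWc, teichmuller_coeff_zero]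
    have step := (base.pow_p_pow le_rfl (n - 1 - i)).mul_p_pow i
    have harith : 1 + (n - 1 - i) + i = n := by omega
    rw [harith] at step
    have heq : (p : WittVector p (MvPolynomial (Fin m) k)) ^ i
            * (wittEps p m k (G i)) ^ p ^ (n - 1 - i)
        - (Wc i) ^ p ^ (n - 1 - i) * (p : WittVector p (MvPolynomial (Fin m) k)) ^ i
        = ((wittEps p m k (G i)) ^ p ^ (n - 1 - i) - (Wc i) ^ p ^ (n - 1 - i))
            * (p : WittVector p (MvPolynomial (Fin m) k)) ^ i := by ring
    rw [heq]
    exact step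
  have h5 : Z n ((∑ i ∈ range n,
      (p : WittVector p (MvPolynomial (Fin m) k)) ^ i
        * (wittEps p m k (G i)) ^ p ^ (n - 1 - i)) - mid2) := by
    rw [hmid2, ← Finset.sum_sub_distrib]
    exact Z.sum h4
  have h6 := h2.add h5.neg
  have heq : ((⇑(frobenius (p := p)))^[n - 1] w - mid2) + -((∑ i ∈ range n,
      (p : WittVector p (MvPolynomial (Fin m) k)) ^ i
        * (wittEps p m k (G i)) ^ p ^ (n - 1 - i)) - mid2)
      = (⇑(frobenius (p := p)))^[n - 1] w - ∑ i ∈ range n,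
          (p : WittVector p (MvPolynomial (Fin m) k)) ^ i
            * (wittEps p m k (G i)) ^ p ^ (n - 1 - i) := by ring
  rw [heq] at h6
  exact h6.exists_eq
end
end

section
/- Let w, w′ ∈ W(k[X₁,…,Xₘ]) and let G₀,…,G_{n−1}, H₀,…,H_{n−1} ∈ W(k)[X₁,…,Xₘ] satisfy π(G_i) = w_i and π(H_i) = w′_i for every i ∈ {0,…,n−1}. If every coefficient of the polynomial Σ_{i=0}^{n−1} p^i G_i^{p^{n−1−i}} − Σ_{i=0}^{n−1} p^i H_i^{p^{n−1−i}} lies in V^n(W(k)), then w_i = w′_i for every i ∈ {0,…,n−1}. (That is, the map F̃^{n−1} from length-n truncated Witt vectors over k[X₁,…,Xₘ] to polynomials over length-n truncated Witt vectors over k is injective.) -/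
noncomputable section

open WittVector Finset

section VIdeal

variable (p : ℕ) [hp : Fact p.Prime] (k : Type*) [CommRing k] [CharP k p]

/-- The ideal `V^r W(k)` of `W(k)`. -/
def vIdeal (r : ℕ) : Ideal (WittVector p k) where
  carrier := Set.range ((⇑(verschiebung (p := p) (R := k)))^[r])
  add_mem' := by
    rintro a b ⟨x, rfl⟩ ⟨y, rfl⟩
    exact ⟨x + y, by rw [iterate_map_add]⟩
  zero_mem' := ⟨0, by rw [iterate_map_zero]⟩
  smul_mem' := by
    rintro c a ⟨x, rfl⟩
    refine ⟨x * (⇑(WittVector.frobenius (p := p) (R := k)))^[r] c, ?_⟩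
    rw [← iterate_verschiebung_mul_left, smul_eq_mul, mul_comm]

variable {p k}

lemma mem_vIdeal_iff {r : ℕ} {x : WittVector p k} :
    x ∈ vIdeal p k r ↔ ∃ y, (⇑(verschiebung (p := p) (R := k)))^[r] y = x := Iff.rfl

lemma vIdeal_antitone {r s : ℕ} (h : r ≤ s) : vIdeal p k s ≤ vIdeal p k r := by
  rintro x ⟨y, rfl⟩
  exact ⟨(⇑(verschiebung (p := p) (R := k)))^[s - r] y, by
    rw [← Function.iterate_add_apply, Nat.add_sub_cancel' h]⟩

lemma vIdeal_mul_mem {a b : ℕ} {x y : WittVector p k}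
    (hx : x ∈ vIdeal p k a) (hy : y ∈ vIdeal p k b) : x * y ∈ vIdeal p k (a + b) := by
  obtain ⟨x', rfl⟩ := hx
  obtain ⟨y', rfl⟩ := hy
  exact ⟨_, (iterate_verschiebung_mul x' y' a b).symm⟩

lemma p_mem_vIdeal : (p : WittVector p k) ∈ vIdeal p k 1 :=
  ⟨WittVector.frobenius (1 : WittVector p k), by
    rw [Function.iterate_one, verschiebung_frobenius, one_mul]⟩

lemma pow_p_mem_vIdeal (i : ℕ) : (p : WittVector p k) ^ i ∈ vIdeal p k i := by
  induction i with
  | zero => exact ⟨1, by simp⟩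
  | succ i ih =>
      rw [pow_succ]
      exact vIdeal_mul_mem ih p_mem_vIdeal

lemma mul_pow_p_eq (x : WittVector p k) (j : ℕ) :
    x * (p : WittVector p k) ^ j
      = (⇑(verschiebung (p := p) (R := k)))^[j] ((⇑(WittVector.frobenius (p := p) (R := k)))^[j] x) := by
  induction j with
  | zero => simp
  | succ j ih =>
      have hcomm : ∀ z : WittVector p k,
          WittVector.frobenius ((⇑(verschiebung (p := p) (R := k)))^[j] z)
            = (⇑(verschiebung (p := p) (R := k)))^[j] (WittVector.frobenius z) :=
        fun z => (verschiebung_frobenius_comm.symm.iterate_right j) z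
      calc x * (p : WittVector p k) ^ (j + 1)
          = (x * (p : WittVector p k) ^ j) * p := by rw [pow_succ, mul_assoc]
        _ = verschiebung (WittVector.frobenius ((⇑(verschiebung (p := p) (R := k)))^[j]
              ((⇑(WittVector.frobenius (p := p) (R := k)))^[j] x))) := by rw [ih, verschiebung_frobenius]
        _ = _ := by
              rw [hcomm, ← Function.iterate_succ_apply' (⇑(verschiebung (p := p) (R := k))),
                ← Function.iterate_succ_apply' (⇑(WittVector.frobenius (p := p) (R := k)))]

lemma verschiebung_injective :
    Function.Injective (⇑(verschiebung (p := p) (R := k))) := by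
  intro a b h
  apply WittVector.ext
  intro i
  rw [← verschiebung_coeff_succ a i, h, verschiebung_coeff_succ]

lemma coeff_zero_pow_eq_zero_of_mul_pow_mem {x : WittVector p k} {j : ℕ}
    (h : x * (p : WittVector p k) ^ j ∈ vIdeal p k (j + 1)) :
    x.coeff 0 ^ p ^ j = 0 := by
  obtain ⟨y, hy⟩ := h
  rw [mul_pow_p_eq] at hy
  have hinj := Function.Injective.iterate (verschiebung_injective (p := p) (k := k)) j
  rw [Function.iterate_succ_apply] at hy
  have := hinj hy
  have h0 : ((⇑(WittVector.frobenius (p := p) (R := k)))^[j] x).coeff 0 = 0 := by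
    rw [← this, verschiebung_coeff_zero]
  rwa [iterate_frobenius_coeff] at h0

lemma mem_vIdeal_one_of_coeff_zero {x : WittVector p k} (h : x.coeff 0 = 0) :
    x ∈ vIdeal p k 1 := by
  refine ⟨WittVector.mk p (fun i => x.coeff (i + 1)), ?_⟩
  rw [Function.iterate_one]
  apply WittVector.ext
  rintro (_ | i)
  · rw [verschiebung_coeff_zero, h]
  · rw [verschiebung_coeff_succ]
    simp [WittVector.coeff_mk]

end VIdeal

section PolyIdeal

variable {p : ℕ} [hp : Fact p.Prime] {k : Type*} [CommRing k] [CharP k p] {m : ℕ}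

/-- Polynomials all of whose coefficients lie in `V^r W(k)`. -/
def cIdeal (p : ℕ) [Fact p.Prime] (k : Type*) [CommRing k] [CharP k p] (m r : ℕ) :
    Ideal (MvPolynomial (Fin m) (WittVector p k)) :=
  Ideal.map MvPolynomial.C (vIdeal p k r)

lemma mem_cIdeal_iff {r : ℕ} {P : MvPolynomial (Fin m) (WittVector p k)} :
    P ∈ cIdeal p k m r ↔ ∀ u, P.coeff u ∈ vIdeal p k r :=
  MvPolynomial.mem_map_C_iff

lemma cIdeal_antitone {r s : ℕ} (h : r ≤ s) : cIdeal p k m s ≤ cIdeal p k m r := by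
  intro P hP
  rw [mem_cIdeal_iff] at hP ⊢
  exact fun u => vIdeal_antitone h (hP u)

lemma cIdeal_mul_mem {a b : ℕ} {P Q : MvPolynomial (Fin m) (WittVector p k)}
    (hP : P ∈ cIdeal p k m a) (hQ : Q ∈ cIdeal p k m b) : P * Q ∈ cIdeal p k m (a + b) := by
  rw [mem_cIdeal_iff] at hP hQ ⊢
  intro u
  rw [MvPolynomial.coeff_mul]
  exact Ideal.sum_mem _ fun x _ => vIdeal_mul_mem (hP x.1) (hQ x.2)

lemma pow_p_mem_cIdeal (i : ℕ) :
    (p : MvPolynomial (Fin m) (WittVector p k)) ^ i ∈ cIdeal p k m i := by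
  have : (p : MvPolynomial (Fin m) (WittVector p k)) ^ i
      = MvPolynomial.C ((p : WittVector p k) ^ i) := by
    rw [map_pow, map_natCast]
  rw [this]
  exact Ideal.mem_map_of_mem _ (pow_p_mem_vIdeal i)

lemma cIdeal_pow_step {r : ℕ} (hr : 1 ≤ r) {P Q : MvPolynomial (Fin m) (WittVector p k)}
    (h : P - Q ∈ cIdeal p k m r) : P ^ p - Q ^ p ∈ cIdeal p k m (r + 1) := by
  set D := P - Q with hD
  have hP : P = Q + D := by rw [hD]; ring
  have hexp := add_pow_prime_eq hp.out Q D
  have hkey : P ^ p - Q ^ p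
      = D ^ p + p * ∑ i ∈ Ioo 0 p, Q ^ i * D ^ (p - i) * ((p.choose i / p : ℕ) :
          MvPolynomial (Fin m) (WittVector p k)) := by
    rw [hP, hexp]
    have hre : (p : MvPolynomial (Fin m) (WittVector p k)) * Q * D * ∑ i ∈ Ioo 0 p,
        Q ^ (i - 1) * D ^ (p - i - 1) * ((p.choose i / p : ℕ) : MvPolynomial (Fin m) (WittVector p k))
        = p * ∑ i ∈ Ioo 0 p, Q ^ i * D ^ (p - i) * ((p.choose i / p : ℕ) :
          MvPolynomial (Fin m) (WittVector p k)) := by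
      rw [mul_sum, mul_sum]
      refine sum_congr rfl fun i hi => ?_
      rw [mem_Ioo] at hi
      obtain ⟨a, rfl⟩ : ∃ a, i = a + 1 := ⟨i - 1, by omega⟩
      obtain ⟨b, hb⟩ : ∃ b, p - (a + 1) = b + 1 := ⟨p - (a + 1) - 1, by omega⟩
      rw [hb]
      simp only [Nat.add_sub_cancel]
      ring
    rw [hre]; ring
  rw [hkey]
  apply Ideal.add_mem
  · -- D ^ p ∈ cIdeal (r+1)
    have h2 : D ^ 2 ∈ cIdeal p k m (r + r) := by
      have := cIdeal_mul_mem h h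
      rwa [← sq] at this
    have hple : 2 ≤ p := hp.out.two_le
    have : D ^ p = D ^ 2 * D ^ (p - 2) := by
      rw [← pow_add, Nat.add_sub_cancel' hple]
    rw [this]
    exact cIdeal_antitone (by omega) (Ideal.mul_mem_right _ _ h2)
  · -- p * sum ∈ cIdeal (r+1)
    have hsum : (∑ i ∈ Ioo 0 p, Q ^ i * D ^ (p - i) * ((p.choose i / p : ℕ) :
        MvPolynomial (Fin m) (WittVector p k))) ∈ cIdeal p k m r := by
      apply Ideal.sum_mem
      intro i hi
      rw [mem_Ioo] at hi
      have h1 : 1 ≤ p - i := by omega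
      have : D ^ (p - i) = D ^ (p - i - 1) * D := by
        rw [← pow_succ, Nat.sub_add_cancel h1]
      rw [this]
      have : Q ^ i * (D ^ (p - i - 1) * D) * ((p.choose i / p : ℕ) :
          MvPolynomial (Fin m) (WittVector p k))
          = (Q ^ i * D ^ (p - i - 1) * ((p.choose i / p : ℕ) :
            MvPolynomial (Fin m) (WittVector p k))) * D := by ring
      rw [this]
      exact Ideal.mul_mem_left _ _ h
    have := cIdeal_mul_mem (pow_p_mem_cIdeal (k := k) (m := m) 1) hsum
    rw [pow_one] at this
    exact cIdeal_antitone (by omega) this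

lemma cIdeal_pow_iter {r : ℕ} (hr : 1 ≤ r) {P Q : MvPolynomial (Fin m) (WittVector p k)}
    (h : P - Q ∈ cIdeal p k m r) (t : ℕ) :
    P ^ p ^ t - Q ^ p ^ t ∈ cIdeal p k m (r + t) := by
  induction t with
  | zero => simpa using h
  | succ t ih =>
      have : P ^ p ^ (t + 1) = (P ^ p ^ t) ^ p := by rw [← pow_mul, pow_succ]
      rw [this]
      have : Q ^ p ^ (t + 1) = (Q ^ p ^ t) ^ p := by rw [← pow_mul, pow_succ]
      rw [this]
      have := cIdeal_pow_step (by omega) ih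
      rwa [show r + t + 1 = r + (t + 1) by omega] at this

end PolyIdeal

section Reduced

variable {p : ℕ} [hp : Fact p.Prime] {k : Type*} [CommRing k] [CharP k p] [IsReduced k] {m : ℕ}

lemma mv_eq_zero_of_pow_p_eq_zero {f : MvPolynomial (Fin m) k} (hf : f ^ p = 0) : f = 0 := by
  haveI : ExpChar (MvPolynomial (Fin m) k) p := ExpChar.prime hp.out
  have hfr : f ^ p = ∑ v ∈ f.support, MvPolynomial.monomial (p • v) (f.coeff v ^ p) := by
    conv_lhs => rw [f.as_sum]
    rw [sum_pow_char]
    simp_rw [MvPolynomial.monomial_pow]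
  apply MvPolynomial.ext
  intro u
  simp only [MvPolynomial.coeff_zero]
  have hinj : ∀ v : Fin m →₀ ℕ, p • v = p • u → v = u := by
    intro v hv
    ext i
    have := congrFun (congrArg (fun g : Fin m →₀ ℕ => (g : Fin m → ℕ)) hv) i
    simp only [Finsupp.coe_smul, Pi.smul_apply, smul_eq_mul] at this
    exact Nat.eq_of_mul_eq_mul_left hp.out.pos this
  have hcu : f.coeff u ^ p = 0 := by
    by_cases hu : u ∈ f.support
    · have h0 : (0 : MvPolynomial (Fin m) k).coeff (p • u) = 0 := MvPolynomial.coeff_zero _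
      rw [← hf, hfr, MvPolynomial.coeff_sum] at h0
      have hterm : ∀ v ∈ f.support,
          (MvPolynomial.monomial (p • v) (f.coeff v ^ p)).coeff (p • u)
            = if v = u then f.coeff v ^ p else 0 := by
        intro v _
        rw [MvPolynomial.coeff_monomial]
        by_cases hvu : v = u
        · subst hvu; simp
        · rw [if_neg (fun hc => hvu (hinj v hc)), if_neg hvu]
      rw [Finset.sum_congr rfl hterm, Finset.sum_ite_eq' f.support u
        (fun v => f.coeff v ^ p), if_pos hu] at h0
      exact h0
    · rw [MvPolynomial.notMem_support_iff.mp hu, zero_pow hp.out.ne_zero]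
  exact IsReduced.pow_eq_zero hcu

lemma mv_eq_zero_of_pow_p_pow_eq_zero {f : MvPolynomial (Fin m) k} {t : ℕ}
    (hf : f ^ p ^ t = 0) : f = 0 := by
  induction t with
  | zero => simpa using hf
  | succ t ih =>
      apply ih
      apply mv_eq_zero_of_pow_p_eq_zero (p := p)
      rw [← pow_mul, ← pow_succ]
      exact hf

end Reduced

section CoeffSub
variable {p : ℕ} [Fact p.Prime] {k : Type*} [CommRing k]

lemma wv_coeff_zero_sub (a b : WittVector p k) :
    (a - b).coeff 0 = a.coeff 0 - b.coeff 0 := by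
  simpa using map_sub (WittVector.constantCoeff (p := p) (R := k)) a b

end CoeffSub


theorem stmt3 (p m n : ℕ) [Fact p.Prime] (hm : 1 ≤ m) (hn : 1 ≤ n)
    (k : Type*) [CommRing k] [IsReduced k] [CharP k p]
    (w w' : WittVector p (MvPolynomial (Fin m) k))
    (G H : ℕ → MvPolynomial (Fin m) (WittVector p k))
    (hG : ∀ i < n, wittPi p m k (G i) = w.coeff i)
    (hH : ∀ i < n, wittPi p m k (H i) = w'.coeff i)
    (h : ∀ u : Fin m →₀ ℕ, ∃ y : WittVector p k,
      ((∑ i ∈ Finset.range n,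
            (p : MvPolynomial (Fin m) (WittVector p k)) ^ i * (G i) ^ p ^ (n - 1 - i))
          - ∑ i ∈ Finset.range n,
              (p : MvPolynomial (Fin m) (WittVector p k)) ^ i * (H i) ^ p ^ (n - 1 - i)).coeff u
        = (⇑(WittVector.verschiebung (p := p)))^[n] y) :
    ∀ i < n, w.coeff i = w'.coeff i := by
  classical
  suffices hS : ∀ j, j < n → w.coeff j = w'.coeff j by exact hS
  intro j
  induction j using Nat.strong_induction_on with
  | _ j IH =>
  intro hj
  -- previous indices have difference in V·W(k) coefficientwise
  have hprev : ∀ i, i < j → G i - H i ∈ cIdeal p k m 1 := by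
    intro i hij
    rw [mem_cIdeal_iff]
    intro u
    apply mem_vIdeal_one_of_coeff_zero
    have h1 : ((G i).coeff u).coeff 0 = (w.coeff i).coeff u := by
      rw [← hG i (hij.trans hj)]
      simp [wittPi, MvPolynomial.coeff_map]
    have h2 : ((H i).coeff u).coeff 0 = (w'.coeff i).coeff u := by
      rw [← hH i (hij.trans hj)]
      simp [wittPi, MvPolynomial.coeff_map]
    have h3 := IH i hij (hij.trans hj)
    rw [MvPolynomial.coeff_sub, wv_coeff_zero_sub, h1, h2, h3, sub_self]
  set T : ℕ → MvPolynomial (Fin m) (WittVector p k) := fun i =>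
    (p : MvPolynomial (Fin m) (WittVector p k)) ^ i *
      ((G i) ^ p ^ (n - 1 - i) - (H i) ^ p ^ (n - 1 - i)) with hT
  have hDsum : ∑ i ∈ Finset.range n, T i
      = (∑ i ∈ Finset.range n,
            (p : MvPolynomial (Fin m) (WittVector p k)) ^ i * (G i) ^ p ^ (n - 1 - i))
        - ∑ i ∈ Finset.range n,
            (p : MvPolynomial (Fin m) (WittVector p k)) ^ i * (H i) ^ p ^ (n - 1 - i) := by
    rw [← Finset.sum_sub_distrib]
    exact Finset.sum_congr rfl fun i _ => by rw [hT]; ring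
  have hD : ∑ i ∈ Finset.range n, T i ∈ cIdeal p k m n := by
    rw [hDsum, mem_cIdeal_iff]
    intro u
    obtain ⟨y, hy⟩ := h u
    exact ⟨y, hy.symm⟩
  have hother : ∀ i ∈ Finset.range n, i ≠ j → T i ∈ cIdeal p k m (j + 1) := by
    intro i hi hne
    rw [Finset.mem_range] at hi
    rcases lt_or_gt_of_ne hne with hlt | hgt
    · have h1 := cIdeal_pow_iter (le_refl 1) (hprev i hlt) (n - 1 - i)
      have h2 := cIdeal_mul_mem (pow_p_mem_cIdeal (p := p) (k := k) (m := m) i) h1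
      refine cIdeal_antitone ?_ h2
      omega
    · refine cIdeal_antitone ?_
        (Ideal.mul_mem_right _ _ (pow_p_mem_cIdeal (p := p) (k := k) (m := m) i))
      omega
  have hjmem : j ∈ Finset.range n := Finset.mem_range.mpr hj
  have hTj : T j ∈ cIdeal p k m (j + 1) := by
    have heq := Finset.add_sum_erase (Finset.range n) T hjmem
    have hTj' : T j = (∑ i ∈ Finset.range n, T i)
        - ∑ i ∈ (Finset.range n).erase j, T i := by
      rw [← heq]; ring
    rw [hTj']
    apply Ideal.sub_mem
    · exact cIdeal_antitone (by omega) hD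
    · exact Ideal.sum_mem _ fun i hi => hother i (Finset.mem_of_mem_erase hi)
        (Finset.ne_of_mem_erase hi)
  have hcoeff : ∀ u, (((G j) ^ p ^ (n - 1 - j)).coeff u
      - ((H j) ^ p ^ (n - 1 - j)).coeff u) * (p : WittVector p k) ^ j
      ∈ vIdeal p k (j + 1) := by
    intro u
    have hmem := (mem_cIdeal_iff.mp hTj) u
    have hC : (p : MvPolynomial (Fin m) (WittVector p k)) ^ j
        = MvPolynomial.C ((p : WittVector p k) ^ j) := by rw [map_pow, map_natCast]
    simp only [hT] at hmem
    rw [hC, MvPolynomial.coeff_C_mul, MvPolynomial.coeff_sub] at hmem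
    rwa [mul_comm]
  have hzero : ∀ u, (((G j) ^ p ^ (n - 1 - j)).coeff u).coeff 0
      = (((H j) ^ p ^ (n - 1 - j)).coeff u).coeff 0 := by
    intro u
    have h1 := coeff_zero_pow_eq_zero_of_mul_pow_mem (hcoeff u)
    rw [wv_coeff_zero_sub] at h1
    have h2 := IsReduced.pow_eq_zero h1
    exact sub_eq_zero.mp h2
  have hpieq : wittPi p m k ((G j) ^ p ^ (n - 1 - j))
      = wittPi p m k ((H j) ^ p ^ (n - 1 - j)) := by
    apply MvPolynomial.ext
    intro u
    simp only [wittPi, MvPolynomial.coeff_map, WittVector.constantCoeff_apply]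
    exact hzero u
  have hpow : (w.coeff j) ^ p ^ (n - 1 - j) = (w'.coeff j) ^ p ^ (n - 1 - j) := by
    rw [map_pow, map_pow, hG j hj, hH j hj] at hpieq
    exact hpieq
  have hsub : (w.coeff j - w'.coeff j) ^ p ^ (n - 1 - j) = 0 := by
    haveI : ExpChar (MvPolynomial (Fin m) k) p :=
      ExpChar.prime (Fact.out : p.Prime)
    rw [sub_pow_char_pow, hpow, sub_self]
  have hfin := mv_eq_zero_of_pow_p_pow_eq_zero (p := p) hsub
  exact sub_eq_zero.mp hfin
end
end

section
/- Let G₀,…,G_{n−1} ∈ W(k)[X₁,…,Xₘ]. Then for every multi-exponent u = (u₁,…,uₘ) ∈ ℕ^m, the coefficient of the monomial X₁^{u₁}⋯Xₘ^{uₘ} in the polynomial Σ_{i=0}^{n−1} p^i G_i^{p^{n−1−i}} belongs to p^{n−1−v(u)}·W(k) + V^n(W(k)); that is, modulo V^n the coefficient at u is divisible by p^{n−1−v(u)}. -/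
noncomputable section

/-- `v(u) = max {j ∈ {0,…,n-1} | pʲ ∣ uᵢ for all i}`. -/
def vOf (p n : ℕ) {m : ℕ} (u : Fin m →₀ ℕ) : ℕ :=
  Nat.findGreatest (fun j => ∀ i, p ^ j ∣ u i) (n - 1)

section Aux

open WittVector MvPolynomial


variable {p : ℕ} [Fact p.Prime] {k : Type*} [CommRing k] [CharP k p]

-- x = [x₀] + V z
lemma decomp (x : WittVector p k) : ∃ z : WittVector p k,
    x = teichmuller p (x.coeff 0) + verschiebung z := by
  set y := x - teichmuller p (x.coeff 0) with hy
  refine ⟨WittVector.mk p (fun n => y.coeff (n+1)), ?_⟩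
  have h0 : y.coeff 0 = 0 := by
    have : WittVector.constantCoeff y = 0 := by
      rw [hy, map_sub]
      simp [WittVector.constantCoeff_apply, teichmuller_coeff_zero]
    simpa [WittVector.constantCoeff_apply] using this
  have : verschiebung (WittVector.mk p (fun n => y.coeff (n+1))) = y := by
    ext n
    cases n with
    | zero => simpa [verschiebung_coeff_zero] using h0.symm
    | succ n => simp [verschiebung_coeff_succ, WittVector.coeff_mk]
  rw [this, hy]; ring

-- (V z)^2 = p * c
lemma vsq (z : WittVector p k) : ∃ c, verschiebung z * verschiebung z = p * c := by
  refine ⟨verschiebung (z * z), ?_⟩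
  have h1 : verschiebung z * verschiebung z
      = verschiebung (z * frobenius (verschiebung z)) := by
    have := iterate_verschiebung_mul_left (p := p) (R := k) z (verschiebung z) 1
    simpa using this
  rw [h1, frobenius_verschiebung]
  have : z * (z * (p : WittVector p k)) = p • (z * z) := by
    rw [nsmul_eq_mul]; ring
  rw [this, map_nsmul, nsmul_eq_mul]

-- x^p = F x + p b
lemma witt_pow_p (x : WittVector p k) : ∃ b, x ^ p = frobenius x + p * b := by
  have hp : p.Prime := Fact.out
  obtain ⟨z, hz⟩ := decomp x
  obtain ⟨s, hs⟩ := exists_add_pow_prime_eq hp (teichmuller p (x.coeff 0)) (verschiebung z)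
  obtain ⟨c, hc⟩ := vsq z
  have h2 : (2 : ℕ) ≤ p := hp.two_le
  have hvp : ∃ d, verschiebung z ^ p = p * d := by
    refine ⟨c * verschiebung z ^ (p - 2), ?_⟩
    calc verschiebung z ^ p = (verschiebung z * verschiebung z) * verschiebung z ^ (p-2) := by
          rw [← pow_two, ← pow_add]; congr 1; omega
      _ = p * (c * verschiebung z ^ (p-2)) := by rw [hc]; ring
  obtain ⟨d, hd⟩ := hvp
  have hF : frobenius x = teichmuller p (x.coeff 0 ^ p) + p * z := by
    conv_lhs => rw [hz]
    rw [map_add, frobenius_verschiebung, frobenius_eq_map_frobenius, map_teichmuller,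
      frobenius_def, mul_comm]
  refine ⟨d + teichmuller p (x.coeff 0) * verschiebung z * s - z, ?_⟩
  conv_lhs => rw [hz]
  rw [hs, hd, ← map_pow, hF]
  ring

variable {m : ℕ}

/-- The "Frobenius" ring endomorphism of `W(k)[X]`: `F` on coefficients, `Xᵢ ↦ Xᵢᵖ`. -/
def phi (p : ℕ) [Fact p.Prime] (m : ℕ) (k : Type*) [CommRing k] :
    MvPolynomial (Fin m) (WittVector p k) →+* MvPolynomial (Fin m) (WittVector p k) :=
  ((MvPolynomial.expand p : MvPolynomial (Fin m) (WittVector p k) →ₐ[WittVector p k]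
      MvPolynomial (Fin m) (WittVector p k)) : _ →+* _).comp
    (MvPolynomial.map (WittVector.frobenius : WittVector p k →+* WittVector p k))

lemma phi_apply (f : MvPolynomial (Fin m) (WittVector p k)) :
    phi p m k f = MvPolynomial.expand p
      (MvPolynomial.map (WittVector.frobenius : WittVector p k →+* WittVector p k) f) := rfl

lemma expand_monomial' (d : Fin m →₀ ℕ) (r : WittVector p k) :
    MvPolynomial.expand p (monomial d r) = monomial (p • d) r := by
  have hp : p ≠ 0 := (Fact.out : p.Prime).ne_zero
  rw [expand_monomial, monomial_eq]

lemma coeff_expand_zero (u : Fin m →₀ ℕ) (g : MvPolynomial (Fin m) (WittVector p k))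
    (h : ∃ i, ¬ p ∣ u i) : (MvPolynomial.expand p g).coeff u = 0 := by
  conv_lhs => rw [← support_sum_monomial_coeff g]
  rw [map_sum]
  rw [Finset.sum_congr rfl (fun w _ => expand_monomial' w (g.coeff w))]
  rw [coeff_sum]
  apply Finset.sum_eq_zero
  intro w _
  rw [coeff_monomial]
  obtain ⟨i, hi⟩ := h
  have : p • w ≠ u := by
    intro he
    exact hi ⟨w i, by rw [← he]; simp [mul_comm]⟩
  simp [this]

lemma coeff_expand_smul (w : Fin m →₀ ℕ) (g : MvPolynomial (Fin m) (WittVector p k)) :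
    (MvPolynomial.expand p g).coeff (p • w) = g.coeff w := by
  have hp : p ≠ 0 := (Fact.out : p.Prime).ne_zero
  conv_lhs => rw [← support_sum_monomial_coeff g]
  rw [map_sum, Finset.sum_congr rfl (fun v _ => expand_monomial' v (g.coeff v)), coeff_sum]
  have hinj : ∀ v : Fin m →₀ ℕ, p • v = p • w → v = w := by
    intro v h
    ext i
    have := DFunLike.congr_fun h i
    simp only [Finsupp.smul_apply, smul_eq_mul] at this
    exact Nat.eq_of_mul_eq_mul_left (Nat.pos_of_ne_zero hp) this
  by_cases hw : w ∈ g.support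
  · rw [Finset.sum_eq_single w]
    · rw [coeff_monomial, if_pos rfl]
    · intro v _ hv
      rw [coeff_monomial, if_neg (fun h => hv (hinj v h))]
    · intro h; exact absurd hw h
  · rw [Finset.sum_eq_zero, eq_comm]
    · simpa using hw
    · intro v hv
      rw [coeff_monomial, if_neg (fun h => (hinj v h ▸ hv : w ∈ g.support) |> hw)]

lemma coeff_phi_iterate (s : ℕ) (f : MvPolynomial (Fin m) (WittVector p k))
    (u : Fin m →₀ ℕ) (h : ∃ i, ¬ p ^ s ∣ u i) : ((phi p m k)^[s] f).coeff u = 0 := by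
  induction s generalizing u f with
  | zero => obtain ⟨i, hi⟩ := h; simp at hi
  | succ s ih =>
    rw [Function.iterate_succ_apply']
    rw [phi_apply]
    by_cases hdvd : ∀ i, p ∣ u i
    · set w : Fin m →₀ ℕ := u.mapRange (· / p) (Nat.zero_div p) with hw
      have hpw : p • w = u := by
        ext i
        simp only [Finsupp.smul_apply, smul_eq_mul, hw, Finsupp.mapRange_apply]
        exact Nat.mul_div_cancel' (hdvd i)
      rw [← hpw, _root_.coeff_expand_smul, MvPolynomial.coeff_map]
      have : ((phi p m k)^[s] f).coeff w = 0 := by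
        apply ih
        obtain ⟨i, hi⟩ := h
        refine ⟨i, fun hdvd2 => hi ?_⟩
        have : p * p ^ s ∣ p * w i := mul_dvd_mul_left p hdvd2
        rw [pow_succ, mul_comm (p ^ s) p]
        have hui : p * w i = u i := by
          have := DFunLike.congr_fun hpw i
          simpa using this
        rwa [hui] at this
      rw [this, map_zero]
    · push_neg at hdvd
      exact coeff_expand_zero u _ hdvd

lemma poly_pow_p (G : MvPolynomial (Fin m) (WittVector p k)) :
    ∃ H, G ^ p = phi p m k G + p * H := by
  have hp : p.Prime := Fact.out
  induction G using MvPolynomial.induction_on with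
  | C a =>
    obtain ⟨b, hb⟩ := witt_pow_p a
    refine ⟨C b, ?_⟩
    have hC : phi p m k (C a) = C (WittVector.frobenius a) := by
      rw [phi_apply, map_C, expand_C]
    rw [← C_pow, hb, hC, map_add, map_mul, map_natCast]
  | add f g hf hg =>
    obtain ⟨Hf, hHf⟩ := hf
    obtain ⟨Hg, hHg⟩ := hg
    obtain ⟨s, hs⟩ := exists_add_pow_prime_eq hp f g
    refine ⟨Hf + Hg + f * g * s, ?_⟩
    rw [hs, hHf, hHg, map_add]
    ring
  | mul_X f i hf =>
    obtain ⟨Hf, hHf⟩ := hf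
    refine ⟨Hf * X i ^ p, ?_⟩
    have hX : phi p m k (X i) = X i ^ p := by rw [phi_apply, map_X, expand_X]
    rw [mul_pow, hHf, map_mul, hX]
    ring

lemma poly_pow_p_pow (e : ℕ) (G : MvPolynomial (Fin m) (WittVector p k)) :
    ∃ c : ℕ → MvPolynomial (Fin m) (WittVector p k),
      G ^ p ^ e = ∑ j ∈ Finset.range (e + 1),
        (p : MvPolynomial (Fin m) (WittVector p k)) ^ j * (⇑(phi p m k))^[e - j] (c j) := by
  induction e generalizing G with
  | zero => exact ⟨fun _ => G, by simp⟩
  | succ e ih =>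
    obtain ⟨c, hc⟩ := ih G
    obtain ⟨H, hH⟩ := poly_pow_p G
    have hdvd : (p : MvPolynomial (Fin m) (WittVector p k)) ∣ G ^ p - phi p m k G :=
      ⟨H, by rw [hH]; ring⟩
    obtain ⟨D, hD⟩ := dvd_sub_pow_of_dvd_sub hdvd e
    refine ⟨fun j => if j = e + 1 then D else c j, ?_⟩
    have key : G ^ p ^ (e + 1) = phi p m k (G ^ p ^ e) + p ^ (e + 1) * D := by
      have h1 : (G ^ p) ^ p ^ e = G ^ p ^ (e + 1) := by
        rw [← pow_mul, pow_succ, mul_comm (p ^ e) p]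
      have h2 : (phi p m k G) ^ p ^ e = phi p m k (G ^ p ^ e) := by rw [map_pow]
      rw [← h1, ← h2]
      linear_combination hD
    rw [key, hc, map_sum]
    have : ∀ j ∈ Finset.range (e + 1),
        phi p m k ((p : MvPolynomial (Fin m) (WittVector p k)) ^ j * (⇑(phi p m k))^[e - j] (c j))
        = (p : MvPolynomial (Fin m) (WittVector p k)) ^ j *
          (⇑(phi p m k))^[e + 1 - j] (if j = e + 1 then D else c j) := by
      intro j hj
      rw [Finset.mem_range] at hj
      rw [map_mul, map_pow, map_natCast, if_neg (by omega)]
      congr 1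
      rw [← Function.iterate_succ_apply' (⇑(phi p m k))]
      congr 1
      omega
    rw [Finset.sum_congr rfl this]
    conv_rhs => rw [Finset.sum_range_succ]
    congr 1
    simp


lemma dvd_coeff_pow (n : ℕ) (G : MvPolynomial (Fin m) (WittVector p k)) (u : Fin m →₀ ℕ)
    (e : ℕ) (he : e ≤ n - 1) :
    (p : WittVector p k) ^ (e - vOf p n u) ∣ (G ^ p ^ e).coeff u := by
  obtain ⟨c, hc⟩ := poly_pow_p_pow e G
  rw [hc, coeff_sum]
  apply Finset.dvd_sum
  intro j hj
  rw [Finset.mem_range] at hj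
  have hcast : (p : MvPolynomial (Fin m) (WittVector p k)) ^ j
      = C ((p : WittVector p k) ^ j) := by
    rw [map_pow, map_natCast]
  rw [hcast, coeff_C_mul]
  by_cases hjv : e - vOf p n u ≤ j
  · exact Dvd.dvd.mul_right (pow_dvd_pow _ hjv) _
  · -- j < e - vOf, so e - j > vOf and e - j ≤ n - 1 : coefficient vanishes
    push_neg at hjv
    have h1 : vOf p n u < e - j := by omega
    have h2 : e - j ≤ n - 1 := by omega
    have hnP : ¬ ∀ i, p ^ (e - j) ∣ u i :=
      Nat.findGreatest_is_greatest h1 h2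
    push_neg at hnP
    rw [coeff_phi_iterate (e - j) (c j) u hnP, mul_zero]
    exact dvd_zero _


end Aux

theorem stmt4 (p m n : ℕ) [Fact p.Prime] (hm : 1 ≤ m) (hn : 1 ≤ n)
    (k : Type*) [CommRing k] [IsReduced k] [CharP k p]
    (G : ℕ → MvPolynomial (Fin m) (WittVector p k)) (u : Fin m →₀ ℕ) :
    ∃ a y : WittVector p k,
      (∑ i ∈ Finset.range n,
          (p : MvPolynomial (Fin m) (WittVector p k)) ^ i * (G i) ^ p ^ (n - 1 - i)).coeff u
        = (p : WittVector p k) ^ (n - 1 - vOf p n u) * a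
            + (⇑(WittVector.verschiebung (p := p)))^[n] y := by
  have hdvd : (p : WittVector p k) ^ (n - 1 - vOf p n u) ∣
      (∑ i ∈ Finset.range n,
          (p : MvPolynomial (Fin m) (WittVector p k)) ^ i * (G i) ^ p ^ (n - 1 - i)).coeff u := by
    rw [MvPolynomial.coeff_sum]
    apply Finset.dvd_sum
    intro i hi
    rw [Finset.mem_range] at hi
    have hcast : (p : MvPolynomial (Fin m) (WittVector p k)) ^ i
        = MvPolynomial.C ((p : WittVector p k) ^ i) := by rw [map_pow, map_natCast]
    rw [hcast, MvPolynomial.coeff_C_mul]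
    have hle : n - 1 - i ≤ n - 1 := by omega
    have hd := dvd_coeff_pow n (G i) u (n - 1 - i) hle
    have : (p : WittVector p k) ^ (n - 1 - vOf p n u) ∣
        (p : WittVector p k) ^ i * (p : WittVector p k) ^ (n - 1 - i - vOf p n u) := by
      rw [← pow_add]
      apply pow_dvd_pow
      omega
    exact this.trans (mul_dvd_mul_left _ hd)
  obtain ⟨a, ha⟩ := hdvd
  refine ⟨a, 0, ?_⟩
  rw [ha, Function.iterate_fixed (map_zero _) n, add_zero]
end
end

section
/- Assume moreover that k is perfect, i.e. the Frobenius endomorphism x ↦ x^p of k is bijective. Let P ∈ W(k)[X₁,…,Xₘ] be a polynomial such that for every multi-exponent u ∈ ℕ^m the coefficient of X₁^{u₁}⋯Xₘ^{uₘ} in P belongs to p^{n−1−v(u)}·W(k). Then there exists w ∈ W(k[X₁,…,Xₘ]) such that F^{n−1}(w) − ε(P) lies in V^n(W(k[X₁,…,Xₘ])). (That is, when k is perfect, the image of F̃^{n−1} is exactly the set of such polynomials.) -/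
noncomputable section

namespace Stmt5Aux

open WittVector

variable {p : ℕ} [hp : Fact p.Prime]

/-- `F^j (V^j x) = p^j x`. -/
lemma frob_iter_versch {R : Type*} [CommRing R] (j : ℕ) (x : WittVector p R) :
    (⇑(frobenius (p := p)))^[j] ((⇑(verschiebung (p := p)))^[j] x)
      = (p : WittVector p R) ^ j * x := by
  induction j generalizing x with
  | zero => simp
  | succ j ih =>
    rw [Function.iterate_succ_apply, Function.iterate_succ_apply',
      frobenius_verschiebung, ← RingHom.coe_pow]
    rw [map_mul, map_natCast, RingHom.coe_pow, ih]
    ring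

/-- Frobenius commutes with `map f` between char-`p` rings. -/
lemma frob_map_comm {R S : Type*} [CommRing R] [CommRing S] [CharP R p] [CharP S p]
    (f : R →+* S) (x : WittVector p R) :
    frobenius (WittVector.map f x) = WittVector.map f (frobenius x) := by
  rw [frobenius_eq_map_frobenius, frobenius_eq_map_frobenius]
  ext n
  simp only [map_coeff]
  exact (f.map_frobenius p _).symm

lemma frob_iter_map_comm {R S : Type*} [CommRing R] [CommRing S] [CharP R p] [CharP S p]
    (f : R →+* S) (v : ℕ) (x : WittVector p R) :
    (⇑(frobenius (p := p)))^[v] (WittVector.map f x)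
      = WittVector.map f ((⇑(frobenius (p := p)))^[v] x) := by
  induction v generalizing x with
  | zero => rfl
  | succ v ih =>
    rw [Function.iterate_succ_apply, Function.iterate_succ_apply, frob_map_comm, ih]

lemma frob_teichmuller {R : Type*} [CommRing R] [CharP R p] (r : R) :
    frobenius (teichmuller p r) = teichmuller p (r ^ p) := by
  rw [frobenius_eq_map_frobenius, map_teichmuller]
  rfl

lemma frob_iter_teichmuller {R : Type*} [CommRing R] [CharP R p] (v : ℕ) (r : R) :
    (⇑(frobenius (p := p)))^[v] (teichmuller p r) = teichmuller p (r ^ p ^ v) := by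
  induction v generalizing r with
  | zero => simp
  | succ v ih =>
    rw [Function.iterate_succ_apply, frob_teichmuller, ih, ← pow_mul, pow_succ']

end Stmt5Aux

theorem stmt5 (p m n : ℕ) [Fact p.Prime] (hm : 1 ≤ m) (hn : 1 ≤ n)
    (k : Type*) [CommRing k] [IsReduced k] [CharP k p]
    (hperf : Function.Bijective fun x : k => x ^ p)
    (P : MvPolynomial (Fin m) (WittVector p k))
    (hP : ∀ u : Fin m →₀ ℕ, (p : WittVector p k) ^ (n - 1 - vOf p n u) ∣ P.coeff u) :
    ∃ (w : WittVector p (MvPolynomial (Fin m) k))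
      (y : WittVector p (MvPolynomial (Fin m) k)),
      (⇑(WittVector.frobenius (p := p)))^[n - 1] w - wittEps p m k P
        = (⇑(WittVector.verschiebung (p := p)))^[n] y := by
  classical
  haveI : PerfectRing k p := ⟨by
    have : ⇑(frobenius k p) = fun x : k => x ^ p := funext fun x => frobenius_def p x
    exact hperf⟩
  set R := MvPolynomial (Fin m) k
  set W := WittVector p R
  set fr : W →+* W := WittVector.frobenius with hfr
  -- It suffices to hit `ε P` exactly by `F^{n-1}`.
  suffices h : wittEps p m k P ∈ (fr ^ (n - 1)).range by
    obtain ⟨w, hw⟩ := h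
    refine ⟨w, 0, ?_⟩
    have h0 : (⇑(WittVector.verschiebung (p := p)))^[n] (0 : W) = 0 :=
      Function.iterate_fixed (by simp) n
    rw [h0, sub_eq_zero, ← hw, ← RingHom.coe_pow]
  -- Decompose `P` into monomials.
  rw [← MvPolynomial.support_sum_monomial_coeff P, map_sum]
  apply Subring.sum_mem
  intro u _
  -- Structure of the exponent `u`.
  obtain ⟨c', hc'⟩ := hP u
  set v := vOf p n u with hv
  have hvle : v ≤ n - 1 := Nat.findGreatest_le _
  have hdvd : ∀ i, p ^ v ∣ u i := by
    have := Nat.findGreatest_spec (P := fun j => ∀ i, p ^ j ∣ u i) (m := 0)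
      (Nat.zero_le (n - 1)) (fun i => by simpa using one_dvd (u i))
    simpa [hv, vOf] using this
  set j := n - 1 - v with hj
  have hnj : n - 1 = v + j := by omega
  -- Compute `ε` of the monomial.
  have heps : wittEps p m k (MvPolynomial.monomial u (P.coeff u))
      = WittVector.map MvPolynomial.C (P.coeff u)
        * u.prod fun i e => (WittVector.teichmuller p (MvPolynomial.X i : R)) ^ e := by
    rw [MvPolynomial.monomial_eq, map_mul, map_finsuppProd]
    simp [wittEps]
  -- The witness.
  set d : WittVector p k := (⇑(WittVector.frobeniusEquiv p k).symm)^[v] c' with hd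
  refine ⟨(⇑(WittVector.verschiebung (p := p)))^[j]
      (WittVector.map MvPolynomial.C d
        * u.prod fun i e =>
            (WittVector.teichmuller p (MvPolynomial.X i : R)) ^ (e / p ^ v)), ?_⟩
  have hcoe : ⇑(fr ^ (n - 1)) = (⇑fr)^[n - 1] := RingHom.coe_pow _ _
  rw [hcoe, hnj, Function.iterate_add_apply, Stmt5Aux.frob_iter_versch]
  -- Push `F^v` through.
  have hcoev : (⇑fr)^[v] = ⇑(fr ^ v) := (RingHom.coe_pow _ _).symm
  rw [hcoev, map_mul, map_mul, map_pow, map_natCast, ← hcoev]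
  -- `F^v (map C d) = map C c'`.
  have hfrd : (⇑fr)^[v] (WittVector.map MvPolynomial.C d)
      = WittVector.map MvPolynomial.C c' := by
    rw [hfr, Stmt5Aux.frob_iter_map_comm]
    congr 1
    have hli : Function.LeftInverse (⇑(WittVector.frobenius (p := p)))
        ⇑(WittVector.frobeniusEquiv p k).symm := fun x =>
      (WittVector.frobeniusEquiv p k).apply_symm_apply x
    exact hli.iterate v c'
  -- `F^v` of the product of Teichmüller representatives.
  have hfrT : (⇑fr)^[v] (u.prod fun i e =>
        (WittVector.teichmuller p (MvPolynomial.X i : R)) ^ (e / p ^ v))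
      = u.prod fun i e => (WittVector.teichmuller p (MvPolynomial.X i : R)) ^ e := by
    rw [hcoev, map_finsuppProd]
    apply Finsupp.prod_congr
    intro i _
    rw [map_pow, ← hcoev, hfr, Stmt5Aux.frob_iter_teichmuller, ← map_pow, ← map_pow,
      ← pow_mul, Nat.mul_div_cancel' (hdvd i)]
  rw [hfrd, hfrT, heps, hc']
  rw [map_mul, map_pow, map_natCast]
  ring
end
end

section
/- Let A be a commutative ring. The set of polynomials P ∈ A[X₁,…,Xₘ] such that for every multi-exponent u ∈ ℕ^m the coefficient of X₁^{u₁}⋯Xₘ^{uₘ} in P belongs to the ideal p^{n−1−v(u)}·A is a subring of A[X₁,…,Xₘ] (it contains 0 and 1 and is closed under addition, negation and multiplication). -/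
noncomputable section

lemma vOf_le (p n : ℕ) {m : ℕ} (u : Fin m →₀ ℕ) : vOf p n u ≤ n - 1 :=
  Nat.findGreatest_le _

lemma vOf_spec (p n : ℕ) {m : ℕ} (u : Fin m →₀ ℕ) : ∀ i, p ^ (vOf p n u) ∣ u i :=
  Nat.findGreatest_spec (P := fun j => ∀ i, p ^ j ∣ u i) (Nat.zero_le _)
    (fun i => by simpa using one_dvd (u i))

lemma vOf_zero (p n : ℕ) {m : ℕ} : vOf p n (0 : Fin m →₀ ℕ) = n - 1 :=
  Nat.le_antisymm (vOf_le _ _ _) (Nat.le_findGreatest le_rfl (fun i => by simpa using dvd_zero _))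

lemma min_le_vOf_add (p n : ℕ) {m : ℕ} (a b : Fin m →₀ ℕ) :
    min (vOf p n a) (vOf p n b) ≤ vOf p n (a + b) := by
  rcases le_total (vOf p n a) (vOf p n b) with h | h
  · rw [min_eq_left h]
    refine Nat.le_findGreatest (vOf_le _ _ _) (fun i => ?_)
    simpa using dvd_add (vOf_spec p n a i)
      ((pow_dvd_pow p h).trans (vOf_spec p n b i))
  · rw [min_eq_right h]
    refine Nat.le_findGreatest (vOf_le _ _ _) (fun i => ?_)
    simpa using dvd_add ((pow_dvd_pow p h).trans (vOf_spec p n a i))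
      (vOf_spec p n b i)

theorem stmt6 (p m n : ℕ) (hp : p.Prime) (hm : 1 ≤ m) (hn : 1 ≤ n)
    (A : Type*) [CommRing A] :
    ∃ S : Subring (MvPolynomial (Fin m) A),
      (S : Set (MvPolynomial (Fin m) A))
        = {P | ∀ u : Fin m →₀ ℕ,
            P.coeff u ∈ Ideal.span {(p : A) ^ (n - 1 - vOf p n u)}} := by
  refine ⟨{
    carrier := {P | ∀ u : Fin m →₀ ℕ,
      P.coeff u ∈ Ideal.span {(p : A) ^ (n - 1 - vOf p n u)}}
    zero_mem' := fun u => by simp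
    one_mem' := fun u => by
      rcases eq_or_ne u 0 with rfl | h
      · rw [Ideal.mem_span_singleton, vOf_zero, Nat.sub_self, pow_zero]
        simp
      · simp [MvPolynomial.coeff_one, Ne.symm h]
    add_mem' := fun {P Q} hP hQ u => by
      rw [MvPolynomial.coeff_add]
      exact Ideal.add_mem _ (hP u) (hQ u)
    neg_mem' := fun {P} hP u => by
      rw [MvPolynomial.coeff_neg]
      exact neg_mem (hP u)
    mul_mem' := fun {P Q} hP hQ u => by
      rw [MvPolynomial.coeff_mul]
      refine Ideal.sum_mem _ (fun x hx => ?_)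
      rw [Finset.HasAntidiagonal.mem_antidiagonal] at hx
      rw [Ideal.mem_span_singleton]
      have h1 := hP x.1
      have h2 := hQ x.2
      rw [Ideal.mem_span_singleton] at h1 h2
      have hdvd : (p : A) ^ (n - 1 - vOf p n u)
          ∣ (p : A) ^ (n - 1 - vOf p n x.1) * (p : A) ^ (n - 1 - vOf p n x.2) := by
        rw [← pow_add]
        apply pow_dvd_pow
        have hmin : min (vOf p n x.1) (vOf p n x.2) ≤ vOf p n u := by
          rw [← hx]; exact min_le_vOf_add p n x.1 x.2
        calc n - 1 - vOf p n u ≤ n - 1 - min (vOf p n x.1) (vOf p n x.2) :=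
                Nat.sub_le_sub_left hmin _
            _ ≤ (n - 1 - vOf p n x.1) + (n - 1 - vOf p n x.2) := by
                rcases min_choice (vOf p n x.1) (vOf p n x.2) with h | h <;>
                  rw [h] <;> omega
      exact hdvd.trans (mul_dvd_mul h1 h2)
  }, rfl⟩
end
end

section
/- Let R be a reduced commutative ring of characteristic p. Then the Witt vector Frobenius F : W(R) → W(R) is injective. -/
theorem stmt8 (p : ℕ) [Fact p.Prime] (R : Type*) [CommRing R] [IsReduced R] [CharP R p] :
    Function.Injective (⇑(WittVector.frobenius (p := p) (R := R))) := by
  rw [WittVector.frobenius_eq_map_frobenius]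
  exact WittVector.map_injective _ (frobenius_inj R p)
end

section
/- Let R be a reduced commutative ring of characteristic p, let n ≥ 1, and let w, w′ ∈ W(R). If F^{n−1}(w) − F^{n−1}(w′) lies in V^n(W(R)), then w_i = w′_i for every i ∈ {0,…,n−1}. (That is, the endomorphism induced by F^{n−1} on length-n truncated Witt vectors W_n(R) is injective.) -/
/-! Elements of `V^n W(R)` have vanishing first `n` coordinates, so they die under truncation
to `W_n(R)`; and in characteristic `p` the map `F^k` raises each coordinate to the power `p^k`,
which is injective on a reduced ring. -/

namespace WittVector

variable {p : ℕ} [Fact p.Prime] {R : Type*} [CommRing R]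

theorem coeff_eq_of_sub_eq_iterate_verschiebung {n : ℕ} {x x' y : WittVector p R}
    (h : x - x' = verschiebung^[n] y) : ∀ i < n, x.coeff i = x'.coeff i := by
  have htrunc : truncate n x = truncate n x' := by
    rw [← sub_eq_zero, ← map_sub, ← RingHom.mem_ker, mem_ker_truncate, h]
    exact fun i hi => iterate_verschiebung_coeff_eq_zero y hi
  intro i hi
  simpa only [coeff_truncate] using congrArg (TruncatedWittVector.coeff ⟨i, hi⟩) htrunc

theorem coeff_eq_of_iterate_frobenius_coeff_eq [IsReduced R] [CharP R p] {x x' : WittVector p R}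
    {k i : ℕ} (h : (frobenius^[k] x).coeff i = (frobenius^[k] x').coeff i) :
    x.coeff i = x'.coeff i := by
  rw [iterate_frobenius_coeff, iterate_frobenius_coeff] at h
  exact iterateFrobenius_inj R p k h

end WittVector

theorem stmt9_general (p n : ℕ) [Fact p.Prime]
    (R : Type*) [CommRing R] [IsReduced R] [CharP R p]
    (w w' : WittVector p R)
    (h : ∃ y : WittVector p R,
      (⇑(WittVector.frobenius (p := p)))^[n - 1] w
          - (⇑(WittVector.frobenius (p := p)))^[n - 1] w'
        = (⇑(WittVector.verschiebung (p := p)))^[n] y) :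
    ∀ i < n, w.coeff i = w'.coeff i := by
  obtain ⟨y, hy⟩ := h
  intro i hi
  exact WittVector.coeff_eq_of_iterate_frobenius_coeff_eq
    (WittVector.coeff_eq_of_sub_eq_iterate_verschiebung hy i hi)

theorem stmt9 (p n : ℕ) [Fact p.Prime] (hn : 1 ≤ n)
    (R : Type*) [CommRing R] [IsReduced R] [CharP R p]
    (w w' : WittVector p R)
    (h : ∃ y : WittVector p R,
      (⇑(WittVector.frobenius (p := p)))^[n - 1] w
          - (⇑(WittVector.frobenius (p := p)))^[n - 1] w'
        = (⇑(WittVector.verschiebung (p := p)))^[n] y) :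
    ∀ i < n, w.coeff i = w'.coeff i :=
  stmt9_general p n R w w' h
end

section
/- (Correctness of the Illusie-isomorphism algorithm for addition.) Let w, w′ ∈ W(k[X₁,…,Xₘ]) and let G₀,…,G_{n−1}, H₀,…,H_{n−1} ∈ W(k)[X₁,…,Xₘ] satisfy π(G_i) = w_i and π(H_i) = w′_i for every i ∈ {0,…,n−1}. Suppose r₀,…,r_{n−1} ∈ k[X₁,…,Xₘ] are such that F^{n−1}(Σ_{i=0}^{n−1} V^i([r_i])) − ε(Σ_{i=0}^{n−1} p^i G_i^{p^{n−1−i}} + Σ_{i=0}^{n−1} p^i H_i^{p^{n−1−i}}) lies in V^n(W(k[X₁,…,Xₘ])). Then r_i = (w + w′)_i for every i ∈ {0,…,n−1}. -/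
noncomputable section

namespace IllusieAux

open WittVector Function Finset

variable {p : ℕ} [hp : Fact p.Prime] {R : Type*} [CommRing R]

local notation "𝕎" => WittVector p

lemma vcoeff_lt (y : 𝕎 R) : ∀ j i, i < j → ((⇑(verschiebung (p := p)))^[j] y).coeff i = 0 := by
  intro j
  induction j with
  | zero => intro i hi; omega
  | succ j ih =>
    intro i hi
    rw [iterate_succ_apply']
    cases i with
    | zero => exact verschiebung_coeff_zero _
    | succ i => rw [verschiebung_coeff_succ]; exact ih i (by omega)

/-- The additive subgroup `V^j W(R)`. -/
def JJ (j : ℕ) : AddSubgroup (𝕎 R) where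
  carrier := Set.range ((⇑(verschiebung (p := p)))^[j])
  add_mem' := by
    rintro a b ⟨c, rfl⟩ ⟨d, rfl⟩
    exact ⟨c + d, by rw [iterate_map_add]⟩
  zero_mem' := ⟨0, by rw [iterate_map_zero]⟩
  neg_mem' := by
    rintro a ⟨c, rfl⟩
    exact ⟨-c, by rw [iterate_map_neg]⟩

lemma mem_JJ {j : ℕ} {x : 𝕎 R} : x ∈ JJ (p := p) j ↔ ∃ c, (⇑(verschiebung (p := p)))^[j] c = x := Iff.rfl

lemma JJ_mono {a b : ℕ} (h : a ≤ b) : JJ (p := p) (R := R) b ≤ JJ a := by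
  rintro x ⟨c, rfl⟩
  refine ⟨(⇑(verschiebung (p := p)))^[b - a] c, ?_⟩
  rw [← iterate_add_apply]
  congr 1
  omega

lemma JJ_mul_right {j : ℕ} {x : 𝕎 R} (hx : x ∈ JJ (p := p) j) (z : 𝕎 R) :
    x * z ∈ JJ (p := p) j := by
  obtain ⟨c, rfl⟩ := hx
  exact ⟨c * (⇑(frobenius (p := p)))^[j] z, (iterate_verschiebung_mul_left c z j).symm⟩

variable [CharP R p]

lemma frob_iter_versch (c : 𝕎 R) (j : ℕ) :
    frobenius ((⇑(verschiebung (p := p)))^[j] c) = (⇑(verschiebung (p := p)))^[j] (frobenius c) := by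
  have := (verschiebung_frobenius_comm.iterate_iterate j 1 c).symm
  simpa using this

lemma JJ_mul {i j : ℕ} {x y : 𝕎 R} (hx : x ∈ JJ (p := p) i) (hy : y ∈ JJ (p := p) j) :
    x * y ∈ JJ (p := p) (i + j) := by
  obtain ⟨c, rfl⟩ := hx
  obtain ⟨d, rfl⟩ := hy
  exact ⟨(⇑(frobenius (p := p)))^[j] c * (⇑(frobenius (p := p)))^[i] d, (iterate_verschiebung_mul c d i j).symm⟩

lemma JJ_p_mul {j : ℕ} {x : 𝕎 R} (hx : x ∈ JJ (p := p) j) :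
    (p : 𝕎 R) * x ∈ JJ (p := p) (j + 1) := by
  obtain ⟨c, rfl⟩ := hx
  refine ⟨frobenius c, ?_⟩
  rw [iterate_succ_apply', ← frob_iter_versch c j, verschiebung_frobenius, mul_comm]

/-- `x * p^i = V^i (F^i x)` in characteristic `p`. -/
lemma mul_p_pow (x : 𝕎 R) (i : ℕ) : x * (p : 𝕎 R) ^ i = (⇑(verschiebung (p := p)))^[i] ((⇑(frobenius (p := p)))^[i] x) := by
  induction i with
  | zero => simp
  | succ i ih =>
    rw [pow_succ, ← mul_assoc, ih, ← verschiebung_frobenius ((⇑(verschiebung (p := p)))^[i] ((⇑(frobenius (p := p)))^[i] x)),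
      iterate_succ_apply', iterate_succ_apply']
    congr 1
    exact frob_iter_versch _ i

lemma p_pow_mem (i : ℕ) : (p : 𝕎 R) ^ i ∈ JJ (p := p) i :=
  ⟨(⇑(frobenius (p := p)))^[i] 1, by rw [← mul_p_pow, one_mul]⟩

/-- key congruence: if `x ≡ y mod V`, then `x^(p^j) ≡ y^(p^j) mod V^(j+1)`. -/
lemma pow_congr {x y : 𝕎 R} (h : x - y ∈ JJ (p := p) 1) (j : ℕ) :
    x ^ p ^ j - y ^ p ^ j ∈ JJ (p := p) (j + 1) := by
  induction j with
  | zero => simpa using h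
  | succ j ih =>
    set a := x ^ p ^ j with ha
    set b := y ^ p ^ j with hb
    have hd : a - b ∈ JJ (p := p) (j + 1) := ih
    have hab : a = (a - b) + b := by ring
    have key := add_pow_prime_eq hp.out (a - b) b
    have h1 : (a - b) ^ p ∈ JJ (p := p) (j + 2) := by
      have h2 : (a - b) * (a - b) ∈ JJ (p := p) (j + 1 + (j + 1)) := JJ_mul hd hd
      have hp2 : p = 2 + (p - 2) := by have := hp.out.two_le; omega
      have h3 : (a - b) ^ p = (a - b) * (a - b) * (a - b) ^ (p - 2) := by
        have e : (a - b) * (a - b) * (a - b) ^ (p - 2) = (a - b) ^ (2 + (p - 2)) := by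
          rw [pow_add]; ring
        rw [e, ← hp2]
      rw [h3]
      exact JJ_mono (by omega) (JJ_mul_right h2 _)
    have h4 : (p : 𝕎 R) * ∑ k ∈ Ioo 0 p,
        (a - b) ^ k * b ^ (p - k) * ((p.choose k / p : ℕ) : 𝕎 R) ∈ JJ (p := p) (j + 2) :=
      JJ_p_mul <| AddSubgroup.sum_mem _ fun k hk => by
        have hk1 : 1 ≤ k := (Finset.mem_Ioo.mp hk).1
        have : (a - b) ^ k * b ^ (p - k) * ((p.choose k / p : ℕ) : 𝕎 R)
            = (a - b) * ((a - b) ^ (k - 1) * b ^ (p - k) * ((p.choose k / p : ℕ) : 𝕎 R)) := by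
          rw [← mul_assoc, ← mul_assoc, ← pow_succ']
          congr 3
          omega
        rw [this]
        exact JJ_mul_right hd _
    have hxp : x ^ p ^ (j + 1) = a ^ p := by rw [ha, ← pow_mul, pow_succ]
    have hyp : y ^ p ^ (j + 1) = b ^ p := by rw [hb, ← pow_mul, pow_succ]
    have : x ^ p ^ (j + 1) - y ^ p ^ (j + 1) = (a - b) ^ p + (p : 𝕎 R) * ∑ k ∈ Ioo 0 p,
        (a - b) ^ k * b ^ (p - k) * ((p.choose k / p : ℕ) : 𝕎 R) := by
      have hsum : (p : 𝕎 R) * (a - b) * b * ∑ k ∈ Ioo 0 p,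
          (a - b) ^ (k - 1) * b ^ (p - k - 1) * ((p.choose k / p : ℕ) : 𝕎 R)
          = (p : 𝕎 R) * ∑ k ∈ Ioo 0 p, (a - b) ^ k * b ^ (p - k) * ((p.choose k / p : ℕ) : 𝕎 R) := by
        simp only [Finset.mul_sum]
        refine Finset.sum_congr rfl fun k hk => ?_
        obtain ⟨hk1, hk2⟩ := Finset.mem_Ioo.mp hk
        have e1 : (a - b) ^ k = (a - b) * (a - b) ^ (k - 1) := by
          rw [← pow_succ']; congr 1; omega
        have e2 : b ^ (p - k) = b * b ^ (p - k - 1) := by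
          rw [← pow_succ']; congr 1; omega
        rw [e1, e2]; ring
      rw [hxp, hyp]
      conv_lhs => rw [hab, key]
      rw [hsum]
      ring
    rw [this]
    exact AddSubgroup.add_mem _ h1 h4

/-- An element whose 0-th coefficient vanishes lies in `V W(R)`. -/
lemma mem_JJ_one {z : 𝕎 R} (h : z.coeff 0 = 0) : z ∈ JJ (p := p) 1 := by
  refine ⟨mk p fun i => z.coeff (i + 1), ?_⟩
  rw [iterate_one]
  ext i
  cases i with
  | zero => rw [verschiebung_coeff_zero, h]
  | succ i => rw [verschiebung_coeff_succ]; rfl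

lemma frobenius_iterate_teichmuller (a : R) (j : ℕ) :
    (⇑(frobenius (p := p)))^[j] (teichmuller p a) = teichmuller p (a ^ p ^ j) := by
  induction j with
  | zero => simp
  | succ j ih =>
    rw [iterate_succ_apply', ih, frobenius_eq_map_frobenius, map_teichmuller, pow_succ, pow_mul]
    rfl

/-- `F^(n-1) (V^i [a]) = p^i * [a]^(p^(n-1-i))` for `i ≤ n-1`. -/
lemma frob_versch_teich (a : R) {i N : ℕ} (hi : i ≤ N) :
    (⇑(frobenius (p := p)))^[N] ((⇑(verschiebung (p := p)))^[i] (teichmuller p a)) =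
      (p : 𝕎 R) ^ i * (teichmuller p a) ^ p ^ (N - i) := by
  have h1 : (⇑(frobenius (p := p)))^[N] ((⇑(verschiebung (p := p)))^[i] (teichmuller p a)) = (⇑(verschiebung (p := p)))^[i] ((⇑(frobenius (p := p)))^[N] (teichmuller p a)) :=
    (((verschiebung_frobenius_comm (R := R)).iterate_iterate i N) _).symm
  rw [h1, frobenius_iterate_teichmuller]
  have h2 : (teichmuller p a) ^ p ^ (N - i) = teichmuller p (a ^ p ^ (N - i)) := by
    rw [← map_pow (teichmuller p : R →* 𝕎 R)]
  rw [h2, mul_comm, mul_p_pow, frobenius_iterate_teichmuller]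
  congr 2
  rw [← pow_mul, ← pow_add]
  have hNi : N - i + i = N := by omega
  rw [hNi]

lemma vteich_coeff (a : R) (M i : ℕ) :
    ((⇑(verschiebung (p := p)))^[M] (teichmuller p a)).coeff i = if i = M then a else 0 := by
  rcases lt_trichotomy i M with h | h | h
  · rw [vcoeff_lt _ _ _ h, if_neg (by omega)]
  · subst h
    rw [if_pos rfl]
    have := iterate_verschiebung_coeff (teichmuller p a) i 0
    rw [zero_add] at this
    rw [this, teichmuller_coeff_zero]
  · rw [if_neg (by omega)]
    have hi : i = (i - M) + M := by omega
    rw [hi, iterate_verschiebung_coeff]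
    exact teichmuller_coeff_pos p a _ (by omega)

lemma sum_vteich_coeff (x : ℕ → R) (M i : ℕ) :
    (∑ j ∈ Finset.range M, (⇑(verschiebung (p := p)))^[j] (teichmuller p (x j))).coeff i
      = if i < M then x i else 0 := by
  induction M generalizing i with
  | zero => simp
  | succ M ih =>
    rw [Finset.sum_range_succ]
    rw [coeff_add_of_disjoint]
    · rw [ih, vteich_coeff]
      rcases lt_trichotomy i M with h | h | h
      · rw [if_pos h, if_neg (by omega), if_pos (by omega), add_zero]
      · subst h
        rw [if_neg (by omega), if_pos rfl, if_pos (by omega), zero_add]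
      · rw [if_neg (by omega), if_neg (by omega), if_neg (by omega), add_zero]
    · intro j
      rcases lt_or_ge j M with h | h
      · right; rw [vteich_coeff, if_neg (by omega)]
      · left; rw [ih, if_neg (by omega)]

/-- iterate of a ring hom commutes with finite sums. -/
lemma iterate_ringHom_sum {A : Type*} [CommRing A] (f : A →+* A) (k : ℕ)
    {ι : Type*} (s : Finset ι) (g : ι → A) :
    (⇑f)^[k] (∑ i ∈ s, g i) = ∑ i ∈ s, (⇑f)^[k] (g i) := by
  induction k generalizing g with
  | zero => simp
  | succ k ih =>
    simp only [iterate_succ_apply, map_sum]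
    exact ih _

lemma polynomial_isReduced {A : Type*} [CommRing A] [IsReduced A] :
    IsReduced (Polynomial A) := by
  constructor
  intro f hf
  ext i
  have := (Polynomial.isNilpotent_iff.mp hf) i
  simpa using this.eq_zero

lemma mvPolynomial_isReduced (k : Type*) [CommRing k] [IsReduced k] (m : ℕ) :
    IsReduced (MvPolynomial (Fin m) k) := by
  induction m with
  | zero =>
    exact isReduced_of_injective (MvPolynomial.isEmptyRingEquiv k (Fin 0)).toRingHom
      (MvPolynomial.isEmptyRingEquiv k (Fin 0)).injective
  | succ m ih =>
    haveI := ih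
    haveI : IsReduced (Polynomial (MvPolynomial (Fin m) k)) := polynomial_isReduced
    exact isReduced_of_injective (MvPolynomial.finSuccEquiv k m).toRingHom
      (MvPolynomial.finSuccEquiv k m).injective

end IllusieAux

lemma wittEps_coeff_zero (p : ℕ) [Fact p.Prime] (m : ℕ) (k : Type*) [CommRing k]
    (P : MvPolynomial (Fin m) (WittVector p k)) :
    (wittEps p m k P).coeff 0 = wittPi p m k P := by
  have : (WittVector.constantCoeff).comp (wittEps p m k) = wittPi p m k := by
    apply MvPolynomial.ringHom_ext
    · intro a
      simp [wittEps, wittPi, WittVector.constantCoeff_apply, WittVector.map_coeff]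
    · intro i
      simp [wittEps, wittPi, WittVector.constantCoeff_apply]
  calc (wittEps p m k P).coeff 0
      = (WittVector.constantCoeff).comp (wittEps p m k) P := rfl
    _ = wittPi p m k P := by rw [this]

set_option maxHeartbeats 2000000 in
theorem stmt11 (p m n : ℕ) [Fact p.Prime] (hm : 1 ≤ m) (hn : 1 ≤ n)
    (k : Type*) [CommRing k] [IsReduced k] [CharP k p]
    (w w' : WittVector p (MvPolynomial (Fin m) k))
    (G H : ℕ → MvPolynomial (Fin m) (WittVector p k))
    (hG : ∀ i < n, wittPi p m k (G i) = w.coeff i)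
    (hH : ∀ i < n, wittPi p m k (H i) = w'.coeff i)
    (r : ℕ → MvPolynomial (Fin m) k)
    (hr : ∃ y : WittVector p (MvPolynomial (Fin m) k),
      (⇑(WittVector.frobenius (p := p)))^[n - 1]
          (∑ i ∈ Finset.range n,
            (⇑(WittVector.verschiebung (p := p)))^[i] (WittVector.teichmuller p (r i)))
        - wittEps p m k
            ((∑ i ∈ Finset.range n,
                (p : MvPolynomial (Fin m) (WittVector p k)) ^ i * (G i) ^ p ^ (n - 1 - i))
              + ∑ i ∈ Finset.range n,
                  (p : MvPolynomial (Fin m) (WittVector p k)) ^ i * (H i) ^ p ^ (n - 1 - i))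
        = (⇑(WittVector.verschiebung (p := p)))^[n] y) :
    ∀ i < n, r i = (w + w').coeff i := by
  classical
  haveI : IsReduced (MvPolynomial (Fin m) k) := IllusieAux.mvPolynomial_isReduced k m
  obtain ⟨y, hy⟩ := hr
  set s : WittVector p (MvPolynomial (Fin m) k) := ∑ i ∈ Finset.range n,
    (⇑(WittVector.verschiebung (p := p)))^[i] (WittVector.teichmuller p (r i)) with hs
  set sw : WittVector p (MvPolynomial (Fin m) k) := ∑ i ∈ Finset.range n,
    (⇑(WittVector.verschiebung (p := p)))^[i] (WittVector.teichmuller p (w.coeff i)) with hsw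
  set sw' : WittVector p (MvPolynomial (Fin m) k) := ∑ i ∈ Finset.range n,
    (⇑(WittVector.verschiebung (p := p)))^[i] (WittVector.teichmuller p (w'.coeff i)) with hsw'
  -- the epsilon image is congruent to (⇑(frobenius (p := p)))^[n-1] (sw + sw') modulo V^n
  have keyG : ∀ P : MvPolynomial (Fin m) (WittVector p k), ∀ a : MvPolynomial (Fin m) k, ∀ i, i < n →
      wittPi p m k P = a →
      (p : WittVector p (MvPolynomial (Fin m) k)) ^ i * (wittEps p m k P) ^ p ^ (n - 1 - i)
        - (⇑(WittVector.frobenius (p := p)))^[n - 1]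
            ((⇑(WittVector.verschiebung (p := p)))^[i] (WittVector.teichmuller p a))
        ∈ IllusieAux.JJ (p := p) n := by
    intro P a i hi hPa
    rw [IllusieAux.frob_versch_teich a (by omega : i ≤ n - 1)]
    rw [← mul_sub]
    have h1 : wittEps p m k P - WittVector.teichmuller p a ∈ IllusieAux.JJ (p := p) 1 := by
      apply IllusieAux.mem_JJ_one
      have : (wittEps p m k P - WittVector.teichmuller p a).coeff 0
          = (wittEps p m k P).coeff 0 - (WittVector.teichmuller p a).coeff 0 := by
        simpa using (map_sub (WittVector.constantCoeff)
          (wittEps p m k P) (WittVector.teichmuller p a))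
      rw [this, wittEps_coeff_zero, hPa, WittVector.teichmuller_coeff_zero, sub_self]
    have h2 := IllusieAux.pow_congr h1 (n - 1 - i)
    have h3 := IllusieAux.JJ_mul (IllusieAux.p_pow_mem (R := MvPolynomial (Fin m) k) i) h2
    have : i + (n - 1 - i + 1) = n := by omega
    rwa [this] at h3
  have hFswsum : (⇑(WittVector.frobenius (p := p)))^[n - 1] sw
      = ∑ i ∈ Finset.range n, (⇑(WittVector.frobenius (p := p)))^[n - 1]
          ((⇑(WittVector.verschiebung (p := p)))^[i] (WittVector.teichmuller p (w.coeff i))) :=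
    IllusieAux.iterate_ringHom_sum _ _ _ _
  have hFsw'sum : (⇑(WittVector.frobenius (p := p)))^[n - 1] sw'
      = ∑ i ∈ Finset.range n, (⇑(WittVector.frobenius (p := p)))^[n - 1]
          ((⇑(WittVector.verschiebung (p := p)))^[i] (WittVector.teichmuller p (w'.coeff i))) :=
    IllusieAux.iterate_ringHom_sum _ _ _ _
  -- epsilon of the big sum
  have hepsA : wittEps p m k
      ((∑ i ∈ Finset.range n,
          (p : MvPolynomial (Fin m) (WittVector p k)) ^ i * (G i) ^ p ^ (n - 1 - i))
        + ∑ i ∈ Finset.range n,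
            (p : MvPolynomial (Fin m) (WittVector p k)) ^ i * (H i) ^ p ^ (n - 1 - i))
      - ((⇑(WittVector.frobenius (p := p)))^[n - 1] sw
        + (⇑(WittVector.frobenius (p := p)))^[n - 1] sw')
      ∈ IllusieAux.JJ (p := p) n := by
    rw [map_add, map_sum, map_sum, hFswsum, hFsw'sum]
    have : ∀ Q : ℕ → MvPolynomial (Fin m) (WittVector p k),
        ∑ i ∈ Finset.range n, wittEps p m k
          ((p : MvPolynomial (Fin m) (WittVector p k)) ^ i * (Q i) ^ p ^ (n - 1 - i))
        = ∑ i ∈ Finset.range n,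
            (p : WittVector p (MvPolynomial (Fin m) k)) ^ i * (wittEps p m k (Q i)) ^ p ^ (n - 1 - i) := by
      intro Q
      refine Finset.sum_congr rfl fun i _ => ?_
      rw [map_mul, map_pow, map_pow, map_natCast]
    rw [this G, this H]
    have hsplit : (∑ i ∈ Finset.range n,
          (p : WittVector p (MvPolynomial (Fin m) k)) ^ i * (wittEps p m k (G i)) ^ p ^ (n - 1 - i)
        + ∑ i ∈ Finset.range n,
          (p : WittVector p (MvPolynomial (Fin m) k)) ^ i * (wittEps p m k (H i)) ^ p ^ (n - 1 - i))
        - (∑ i ∈ Finset.range n, (⇑(WittVector.frobenius (p := p)))^[n - 1]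
            ((⇑(WittVector.verschiebung (p := p)))^[i] (WittVector.teichmuller p (w.coeff i)))
          + ∑ i ∈ Finset.range n, (⇑(WittVector.frobenius (p := p)))^[n - 1]
            ((⇑(WittVector.verschiebung (p := p)))^[i] (WittVector.teichmuller p (w'.coeff i))))
        = (∑ i ∈ Finset.range n,
            ((p : WittVector p (MvPolynomial (Fin m) k)) ^ i * (wittEps p m k (G i)) ^ p ^ (n - 1 - i)
              - (⇑(WittVector.frobenius (p := p)))^[n - 1]
                ((⇑(WittVector.verschiebung (p := p)))^[i]
                  (WittVector.teichmuller p (w.coeff i)))))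
          + ∑ i ∈ Finset.range n,
            ((p : WittVector p (MvPolynomial (Fin m) k)) ^ i * (wittEps p m k (H i)) ^ p ^ (n - 1 - i)
              - (⇑(WittVector.frobenius (p := p)))^[n - 1]
                ((⇑(WittVector.verschiebung (p := p)))^[i]
                  (WittVector.teichmuller p (w'.coeff i)))) := by
      rw [Finset.sum_sub_distrib, Finset.sum_sub_distrib]
      ring
    rw [hsplit]
    refine AddSubgroup.add_mem _ (AddSubgroup.sum_mem _ fun i hi => ?_)
      (AddSubgroup.sum_mem _ fun i hi => ?_)
    · exact keyG (G i) (w.coeff i) i (Finset.mem_range.mp hi) (hG i (Finset.mem_range.mp hi))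
    · exact keyG (H i) (w'.coeff i) i (Finset.mem_range.mp hi) (hH i (Finset.mem_range.mp hi))
  -- combine
  have hmain : (⇑(WittVector.frobenius (p := p)))^[n - 1] (s - (sw + sw'))
      ∈ IllusieAux.JJ (p := p) n := by
    have h5 : (⇑(WittVector.frobenius (p := p)))^[n - 1] s
        - ((⇑(WittVector.frobenius (p := p)))^[n - 1] sw
          + (⇑(WittVector.frobenius (p := p)))^[n - 1] sw')
        ∈ IllusieAux.JJ (p := p) n := by
      have h6 : (⇑(WittVector.frobenius (p := p)))^[n - 1] s
          - wittEps p m k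
            ((∑ i ∈ Finset.range n,
                (p : MvPolynomial (Fin m) (WittVector p k)) ^ i * (G i) ^ p ^ (n - 1 - i))
              + ∑ i ∈ Finset.range n,
                  (p : MvPolynomial (Fin m) (WittVector p k)) ^ i * (H i) ^ p ^ (n - 1 - i))
          ∈ IllusieAux.JJ (p := p) n := ⟨y, hy.symm⟩
      have := AddSubgroup.add_mem _ h6 hepsA
      rwa [sub_add_sub_cancel] at this
    rw [iterate_map_sub, iterate_map_add]
    exact h5
  -- coefficients below n vanish
  have hcoeff : ∀ i < n, (s - (sw + sw')).coeff i = 0 := by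
    intro i hi
    obtain ⟨c, hc⟩ := hmain
    have h7 : ((⇑(WittVector.frobenius (p := p)))^[n - 1] (s - (sw + sw'))).coeff i
        = (s - (sw + sw')).coeff i ^ p ^ (n - 1) :=
      WittVector.iterate_frobenius_coeff _ _ _
    rw [← hc, IllusieAux.vcoeff_lt c n i hi] at h7
    have : IsNilpotent ((s - (sw + sw')).coeff i) := ⟨p ^ (n - 1), h7.symm⟩
    exact this.eq_zero
  -- truncate
  have htrunc : WittVector.truncate n s = WittVector.truncate n (sw + sw') := by
    rw [← sub_eq_zero, ← map_sub]
    refine TruncatedWittVector.ext fun i => ?_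
    rw [WittVector.coeff_truncate, hcoeff i i.2]
    simp
  have htw : WittVector.truncate n sw = WittVector.truncate n w := by
    refine TruncatedWittVector.ext fun i => ?_
    rw [WittVector.coeff_truncate, WittVector.coeff_truncate, hsw,
      IllusieAux.sum_vteich_coeff, if_pos i.2]
  have htw' : WittVector.truncate n sw' = WittVector.truncate n w' := by
    refine TruncatedWittVector.ext fun i => ?_
    rw [WittVector.coeff_truncate, WittVector.coeff_truncate, hsw',
      IllusieAux.sum_vteich_coeff, if_pos i.2]
  intro i hi
  have h8 : (WittVector.truncate n s).coeff ⟨i, hi⟩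
      = (WittVector.truncate n (w + w')).coeff ⟨i, hi⟩ := by
    rw [htrunc, map_add, htw, htw', ← map_add]
  rw [WittVector.coeff_truncate, WittVector.coeff_truncate] at h8
  rw [hs, IllusieAux.sum_vteich_coeff, if_pos hi] at h8
  exact h8
end
end

section
/- (Correctness of the Illusie-isomorphism algorithm for multiplication.) Let w, w′ ∈ W(k[X₁,…,Xₘ]) and let G₀,…,G_{n−1}, H₀,…,H_{n−1} ∈ W(k)[X₁,…,Xₘ] satisfy π(G_i) = w_i and π(H_i) = w′_i for every i ∈ {0,…,n−1}. Suppose r₀,…,r_{n−1} ∈ k[X₁,…,Xₘ] are such that F^{n−1}(Σ_{i=0}^{n−1} V^i([r_i])) − ε((Σ_{i=0}^{n−1} p^i G_i^{p^{n−1−i}}) · (Σ_{i=0}^{n−1} p^i H_i^{p^{n−1−i}})) lies in V^n(W(k[X₁,…,Xₘ])). Then r_i = (w · w′)_i for every i ∈ {0,…,n−1}. -/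
noncomputable section

open WittVector Function

namespace Stmt12Aux

variable {p : ℕ} [hp : Fact p.Prime] {R : Type*} [CommRing R]

local notation "𝕎" => WittVector p

/-- The kernel ideal of truncation. -/
def K (p : ℕ) [Fact p.Prime] (R : Type*) [CommRing R] (s : ℕ) : Ideal (WittVector p R) :=
  RingHom.ker (WittVector.truncate (p := p) s)

theorem mem_K {s : ℕ} {x : 𝕎 R} : x ∈ K p R s ↔ ∀ i < s, x.coeff i = 0 :=
  WittVector.mem_ker_truncate s x

theorem iterV_coeff_lt (u : 𝕎 R) : ∀ s, ∀ i < s, ((⇑(verschiebung (p := p)))^[s] u).coeff i = 0 := by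
  intro s
  induction s with
  | zero => intro i hi; omega
  | succ s ih =>
    intro i hi
    rw [Function.iterate_succ_apply']
    cases i with
    | zero => exact verschiebung_coeff_zero _
    | succ j => rw [verschiebung_coeff_succ]; exact ih j (by omega)

theorem iterV_mem (u : 𝕎 R) (s : ℕ) : (⇑(verschiebung (p := p)))^[s] u ∈ K p R s :=
  mem_K.2 (iterV_coeff_lt u s)

theorem K_mono {s t : ℕ} (h : s ≤ t) : K p R t ≤ K p R s := fun x hx =>
  mem_K.2 fun i hi => mem_K.1 hx i (lt_of_lt_of_le hi h)

theorem coeff_eq_of_sub_mem {x y : 𝕎 R} {j : ℕ} (h : x - y ∈ K p R (j + 1)) :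
    x.coeff j = y.coeff j := by
  have : WittVector.truncate (p := p) (j + 1) x = WittVector.truncate (p := p) (j + 1) y := by
    have := RingHom.mem_ker.1 h
    rw [map_sub, sub_eq_zero] at this
    exact this
  have := congrArg (fun z => TruncatedWittVector.coeff (⟨j, Nat.lt_succ_self j⟩ : Fin (j + 1)) z) this
  simpa only [WittVector.coeff_truncate] using this

theorem V_mem {x : 𝕎 R} {s : ℕ} (h : x ∈ K p R s) : verschiebung x ∈ K p R (s + 1) := by
  rw [mem_K] at h ⊢
  intro i hi
  cases i with
  | zero => exact verschiebung_coeff_zero _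
  | succ j => rw [verschiebung_coeff_succ]; exact h j (by omega)

theorem V_mem_inv {x : 𝕎 R} {s : ℕ} (h : verschiebung x ∈ K p R (s + 1)) : x ∈ K p R s := by
  rw [mem_K] at h ⊢
  intro i hi
  have := h (i + 1) (by omega)
  rwa [verschiebung_coeff_succ] at this

theorem exists_V {x : 𝕎 R} (h : x.coeff 0 = 0) :
    ∃ u : 𝕎 R, x = verschiebung u ∧ ∀ i, u.coeff i = x.coeff (i + 1) := by
  refine ⟨WittVector.mk p (fun i => x.coeff (i + 1)), ?_, fun i => by rw [WittVector.coeff_mk]⟩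
  apply WittVector.ext
  intro i
  cases i with
  | zero => rw [verschiebung_coeff_zero, h]
  | succ j => rw [verschiebung_coeff_succ, WittVector.coeff_mk]

theorem exists_iterV : ∀ (s : ℕ) (x : 𝕎 R), x ∈ K p R s →
    ∃ u, x = (⇑(verschiebung (p := p)))^[s] u := by
  intro s
  induction s with
  | zero => exact fun x _ => ⟨x, rfl⟩
  | succ s ih =>
    intro x hx
    obtain ⟨u, hu, hcoeff⟩ := exists_V (mem_K.1 hx 0 (by omega))
    have hu' : u ∈ K p R s := by
      rw [mem_K]
      intro i hi
      rw [hcoeff i]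
      exact mem_K.1 hx (i + 1) (by omega)
    obtain ⟨v, hv⟩ := ih u hu'
    exact ⟨v, by rw [hu, hv]; exact (Function.iterate_succ_apply' _ s v).symm⟩

section CharP

variable [CharP R p]

theorem F_mem {x : 𝕎 R} {s : ℕ} (h : x ∈ K p R s) : frobenius x ∈ K p R s := by
  rw [mem_K] at h ⊢
  intro i hi
  rw [coeff_frobenius_charP, h i hi, zero_pow hp.out.ne_zero]

theorem iterF_mem {x : 𝕎 R} {s : ℕ} (t : ℕ) (h : x ∈ K p R s) :
    (⇑(frobenius (p := p)))^[t] x ∈ K p R s := by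
  induction t with
  | zero => exact h
  | succ t ih => rw [Function.iterate_succ_apply']; exact F_mem ih

theorem p_mul_mem {x : 𝕎 R} {s : ℕ} (h : x ∈ K p R s) :
    (p : 𝕎 R) * x ∈ K p R (s + 1) := by
  rw [mul_comm, ← verschiebung_frobenius]
  exact V_mem (F_mem h)

theorem p_pow_mul_mem {x : 𝕎 R} {s : ℕ} (h : x ∈ K p R s) (j : ℕ) :
    (p : 𝕎 R) ^ j * x ∈ K p R (s + j) := by
  induction j with
  | zero => simpa using h
  | succ j ih =>
    have := p_mul_mem ih
    rw [← mul_assoc, mul_comm ((p : 𝕎 R)) ((p : 𝕎 R) ^ j), ← pow_succ] at this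
    exact this

theorem mul_mem {x y : 𝕎 R} {s t : ℕ} (hx : x ∈ K p R s) (hy : y ∈ K p R t) :
    x * y ∈ K p R (s + t) := by
  obtain ⟨u, rfl⟩ := exists_iterV s x hx
  obtain ⟨v, rfl⟩ := exists_iterV t y hy
  rw [iterate_verschiebung_mul]
  exact iterV_mem _ _

theorem pow_p_sub_mem {x y : 𝕎 R} {s : ℕ} (hs : 1 ≤ s) (h : x - y ∈ K p R s) :
    x ^ p - y ^ p ∈ K p R (s + 1) := by
  set z := x - y with hz
  have hx : x = y + z := by rw [hz]; ring
  have hzp : z ^ p ∈ K p R (s + 1) := by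
    have h2s : z * z ∈ K p R (s + s) := mul_mem h h
    have h2 : z ^ 2 ∈ K p R (s + 1) :=
      K_mono (show s + 1 ≤ s + s by omega) (by rwa [pow_two])
    have : z ^ p = z ^ 2 * z ^ (p - 2) := by
      rw [← pow_add]
      congr 1
      have := hp.out.two_le
      omega
    rw [this]
    exact Ideal.mul_mem_right _ _ h2
  have hsum : (y * z * ∑ k ∈ Finset.Ioo 0 p, y ^ (k - 1) * z ^ (p - k - 1) * ((p.choose k / p : ℕ) : 𝕎 R))
      ∈ K p R s := by
    exact Ideal.mul_mem_right _ _ (Ideal.mul_mem_left _ _ h)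
  have key := add_pow_prime_eq hp.out y z
  rw [← hx] at key
  have : x ^ p - y ^ p = z ^ p + (p : 𝕎 R) * (y * z * ∑ k ∈ Finset.Ioo 0 p,
      y ^ (k - 1) * z ^ (p - k - 1) * ((p.choose k / p : ℕ) : 𝕎 R)) := by
    rw [key]; ring
  rw [this]
  exact Ideal.add_mem _ hzp (p_mul_mem hsum)

theorem pow_pow_sub_mem {x y : 𝕎 R} (h : x - y ∈ K p R 1) (j : ℕ) :
    x ^ p ^ j - y ^ p ^ j ∈ K p R (j + 1) := by
  induction j with
  | zero => simpa using h
  | succ j ih =>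
    have := pow_p_sub_mem (by omega) ih
    rwa [← pow_mul, ← pow_mul, ← pow_succ] at this

theorem F_teich (a : R) : frobenius (teichmuller p a) = teichmuller p (a ^ p) := by
  apply WittVector.ext
  intro i
  rw [coeff_frobenius_charP]
  cases i with
  | zero => rw [teichmuller_coeff_zero, teichmuller_coeff_zero]
  | succ j =>
    rw [teichmuller_coeff_pos _ _ _ (Nat.succ_pos j), teichmuller_coeff_pos _ _ _ (Nat.succ_pos j),
      zero_pow hp.out.ne_zero]

theorem iterF_teich (a : R) (t : ℕ) :
    (⇑(frobenius (p := p)))^[t] (teichmuller p a) = teichmuller p (a ^ p ^ t) := by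
  induction t with
  | zero => simp
  | succ t ih =>
    rw [Function.iterate_succ_apply', ih, F_teich, ← pow_mul, ← pow_succ]

theorem iterF_p (t : ℕ) : (⇑(frobenius (p := p)))^[t] ((p : 𝕎 R)) = (p : 𝕎 R) := by
  induction t with
  | zero => simp
  | succ t ih => rw [Function.iterate_succ_apply', ih, map_natCast]

theorem iterF_iterV (x : 𝕎 R) : ∀ i : ℕ,
    (⇑(frobenius (p := p)))^[i] ((⇑(verschiebung (p := p)))^[i] x) = x * (p : 𝕎 R) ^ i := by
  intro i
  induction i with
  | zero => simp
  | succ i ih =>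
    rw [Function.iterate_succ_apply' (⇑(verschiebung (p := p))),
      Function.iterate_succ_apply (⇑(frobenius (p := p))), frobenius_verschiebung, iterate_map_mul,
      ih, iterF_p, mul_assoc, ← pow_succ]

end CharP

theorem decomp (x : 𝕎 R) : ∃ u : 𝕎 R,
    x = teichmuller p (x.coeff 0) + verschiebung u ∧ ∀ i, u.coeff i = x.coeff (i + 1) := by
  refine ⟨WittVector.mk p (fun i => x.coeff (i + 1)), ?_, fun i => by rw [WittVector.coeff_mk]⟩
  apply WittVector.ext
  intro i
  have hdisj : ∀ n, (teichmuller p (x.coeff 0)).coeff n = 0 ∨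
      (verschiebung (WittVector.mk p (fun i => x.coeff (i + 1)))).coeff n = 0 := by
    intro n
    cases n with
    | zero => exact Or.inr (verschiebung_coeff_zero _)
    | succ j => exact Or.inl (teichmuller_coeff_pos _ _ _ (Nat.succ_pos j))
  rw [coeff_add_of_disjoint _ _ _ hdisj]
  cases i with
  | zero => rw [teichmuller_coeff_zero, verschiebung_coeff_zero, add_zero]
  | succ j =>
    rw [teichmuller_coeff_pos _ _ _ (Nat.succ_pos j), verschiebung_coeff_succ,
      WittVector.coeff_mk, zero_add]

theorem sum_repr : ∀ (n : ℕ) (x : 𝕎 R),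
    x - ∑ i ∈ Finset.range n, (⇑(verschiebung (p := p)))^[i] (teichmuller p (x.coeff i))
      ∈ K p R n := by
  intro n
  induction n with
  | zero => intro x; exact mem_K.2 fun i hi => by omega
  | succ n ih =>
    intro x
    obtain ⟨u, hdec, hcoeff⟩ := decomp x
    have hsum : ∑ i ∈ Finset.range (n + 1),
        (⇑(verschiebung (p := p)))^[i] (teichmuller p (x.coeff i))
        = teichmuller p (x.coeff 0) + verschiebung
            (∑ i ∈ Finset.range n, (⇑(verschiebung (p := p)))^[i] (teichmuller p (u.coeff i))) := by
      rw [Finset.sum_range_succ', map_sum, add_comm]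
      simp only [Function.iterate_zero_apply]
      congr 1
      apply Finset.sum_congr rfl
      intro i _
      rw [hcoeff i]; exact Function.iterate_succ_apply' _ _ _
    rw [hsum]
    have : x - (teichmuller p (x.coeff 0) + verschiebung
        (∑ i ∈ Finset.range n, (⇑(verschiebung (p := p)))^[i] (teichmuller p (u.coeff i))))
        = verschiebung (u - ∑ i ∈ Finset.range n,
            (⇑(verschiebung (p := p)))^[i] (teichmuller p (u.coeff i))) := by
      rw [map_sub]
      nth_rewrite 1 [hdec]
      ring
    rw [this]
    exact V_mem (ih u)

theorem teich_sum_coeff : ∀ (n : ℕ) (r : ℕ → R) (x : 𝕎 R),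
    (∑ i ∈ Finset.range n, (⇑(verschiebung (p := p)))^[i] (teichmuller p (r i))) - x ∈ K p R n →
    ∀ j < n, r j = x.coeff j := by
  intro n
  induction n with
  | zero => intro r x _ j hj; omega
  | succ n ih =>
    intro r x h j hj
    obtain ⟨u, hdec, hcoeff⟩ := decomp x
    have hsum : ∑ i ∈ Finset.range (n + 1),
        (⇑(verschiebung (p := p)))^[i] (teichmuller p (r i))
        = teichmuller p (r 0) + verschiebung
            (∑ i ∈ Finset.range n, (⇑(verschiebung (p := p)))^[i] (teichmuller p (r (i + 1)))) := by
      rw [Finset.sum_range_succ', map_sum, add_comm]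
      simp only [Function.iterate_zero_apply]
      congr 1
      apply Finset.sum_congr rfl
      intro i _
      exact Function.iterate_succ_apply' _ _ _
    have hr0 : r 0 = x.coeff 0 := by
      have h1 : (∑ i ∈ Finset.range (n + 1),
          (⇑(verschiebung (p := p)))^[i] (teichmuller p (r i))).coeff 0 = x.coeff 0 :=
        coeff_eq_of_sub_mem (K_mono (by omega) h)
      rw [hsum, add_coeff_zero, teichmuller_coeff_zero, verschiebung_coeff_zero, add_zero] at h1
      exact h1
    have hVdiff : verschiebung
        ((∑ i ∈ Finset.range n, (⇑(verschiebung (p := p)))^[i] (teichmuller p (r (i + 1)))) - u)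
        ∈ K p R (n + 1) := by
      have heq : (∑ i ∈ Finset.range (n + 1),
          (⇑(verschiebung (p := p)))^[i] (teichmuller p (r i))) - x
          = verschiebung ((∑ i ∈ Finset.range n,
              (⇑(verschiebung (p := p)))^[i] (teichmuller p (r (i + 1)))) - u) := by
        rw [map_sub, hsum, hdec, ← hr0]
        ring
      rw [← heq]
      exact h
    have hmem := V_mem_inv hVdiff
    cases j with
    | zero => exact hr0
    | succ j =>
      rw [← hcoeff j]
      exact ih (fun i => r (i + 1)) u hmem j (by omega)

theorem iterF_sum {ι : Type*} [CharP R p] (s : Finset ι) (f : ι → 𝕎 R) (t : ℕ) :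
    (⇑(frobenius (p := p)))^[t] (∑ i ∈ s, f i) = ∑ i ∈ s, (⇑(frobenius (p := p)))^[t] (f i) := by
  induction t with
  | zero => simp
  | succ t ih =>
    rw [Function.iterate_succ_apply', ih, map_sum]
    exact Finset.sum_congr rfl fun i _ => (Function.iterate_succ_apply' _ _ _).symm

theorem iterF_V_teich [CharP R p] (c : R) (e j : ℕ) :
    (⇑(frobenius (p := p)))^[e + j] ((⇑(verschiebung (p := p)))^[j] (teichmuller p c))
      = (p : 𝕎 R) ^ j * teichmuller p c ^ p ^ e := by
  rw [Function.iterate_add_apply, iterF_iterV, iterate_map_mul, iterF_teich,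
    map_pow (teichmuller p) c (p ^ e)]
  rw [show ((p : 𝕎 R) ^ j) = ((p : 𝕎 R)) ^ j from rfl]
  rw [iterate_map_pow, iterF_p, mul_comm]

theorem isReduced_of_injective {A B : Type*} [CommRing A] [CommRing B] [IsReduced B]
    (f : A →+* B) (hf : Function.Injective f) : IsReduced A := by
  constructor
  intro a ha
  have h0 : f a = 0 := (ha.map f).eq_zero
  exact hf (by rw [h0, map_zero])

instance polyReduced {S : Type*} [CommRing S] [IsReduced S] : IsReduced (Polynomial S) := by
  constructor
  intro P hP
  have h := Polynomial.isNilpotent_iff.mp hP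
  ext i
  simpa using (h i).eq_zero

theorem mvReduced (S : Type*) [CommRing S] [IsReduced S] (m : ℕ) :
    IsReduced (MvPolynomial (Fin m) S) := by
  induction m with
  | zero =>
    exact isReduced_of_injective (MvPolynomial.isEmptyRingEquiv S (Fin 0)).toRingHom
      (MvPolynomial.isEmptyRingEquiv S (Fin 0)).injective
  | succ m ih =>
    haveI := ih
    exact isReduced_of_injective
      ((MvPolynomial.finSuccEquiv S m : MvPolynomial (Fin (m+1)) S ≃ₐ[S]
        Polynomial (MvPolynomial (Fin m) S)).toRingEquiv.toRingHom)
      (MvPolynomial.finSuccEquiv S m).injective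

end Stmt12Aux

open Stmt12Aux
theorem constantCoeff_wittEps (p m : ℕ) [Fact p.Prime] (k : Type*) [CommRing k]
    (Q : MvPolynomial (Fin m) (WittVector p k)) :
    WittVector.constantCoeff (wittEps p m k Q) = wittPi p m k Q := by
  have h : (WittVector.constantCoeff).comp (wittEps p m k) = wittPi p m k := by
    apply MvPolynomial.ringHom_ext
    · intro a
      simp only [wittEps, wittPi, RingHom.comp_apply, MvPolynomial.eval₂Hom_C,
        MvPolynomial.map_C, WittVector.constantCoeff_apply, WittVector.map_coeff]
    · intro i
      simp only [wittEps, wittPi, RingHom.comp_apply, MvPolynomial.eval₂Hom_X',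
        MvPolynomial.map_X, WittVector.constantCoeff_apply, WittVector.teichmuller_coeff_zero]
  exact RingHom.congr_fun h Q

theorem eps_claim (p m n : ℕ) [Fact p.Prime] (hn : 1 ≤ n) (k : Type*) [CommRing k] [CharP k p]
    (w : WittVector p (MvPolynomial (Fin m) k))
    (G : ℕ → MvPolynomial (Fin m) (WittVector p k))
    (hG : ∀ i < n, wittPi p m k (G i) = w.coeff i) :
    wittEps p m k (∑ i ∈ Finset.range n,
        (p : MvPolynomial (Fin m) (WittVector p k)) ^ i * (G i) ^ p ^ (n - 1 - i))
      - (⇑(WittVector.frobenius (p := p)))^[n - 1] w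
      ∈ K p (MvPolynomial (Fin m) k) n := by
  let A := MvPolynomial (Fin m) k
  -- expand epsilon
  have h1 : wittEps p m k (∑ i ∈ Finset.range n,
        (p : MvPolynomial (Fin m) (WittVector p k)) ^ i * (G i) ^ p ^ (n - 1 - i))
      = ∑ i ∈ Finset.range n,
        (p : WittVector p A) ^ i * (wittEps p m k (G i)) ^ p ^ (n - 1 - i) := by
    rw [map_sum]
    apply Finset.sum_congr rfl
    intro i _
    rw [map_mul, map_pow, map_pow, map_natCast]
  -- expand iterated Frobenius of the sum representation of w
  have h2 : (⇑(WittVector.frobenius (p := p)))^[n - 1]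
        (∑ j ∈ Finset.range n,
          (⇑(WittVector.verschiebung (p := p)))^[j] (WittVector.teichmuller p (w.coeff j)))
      = ∑ j ∈ Finset.range n,
        (p : WittVector p A) ^ j * (WittVector.teichmuller p (w.coeff j)) ^ p ^ (n - 1 - j) := by
    rw [iterF_sum]
    apply Finset.sum_congr rfl
    intro j hj
    rw [Finset.mem_range] at hj
    have hgen := iterF_V_teich (p := p) (w.coeff j) (n - 1 - j) j
    rwa [show n - 1 - j + j = n - 1 by omega] at hgen
  have h3 := sum_repr (p := p) n w
  have h4 : (⇑(WittVector.frobenius (p := p)))^[n - 1] w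
      - ∑ j ∈ Finset.range n,
        (p : WittVector p A) ^ j * (WittVector.teichmuller p (w.coeff j)) ^ p ^ (n - 1 - j)
      ∈ K p A n := by
    rw [← h2, ← iterate_map_sub]
    exact iterF_mem _ h3
  have h5 : (∑ i ∈ Finset.range n,
        (p : WittVector p A) ^ i * (wittEps p m k (G i)) ^ p ^ (n - 1 - i))
      - ∑ j ∈ Finset.range n,
        (p : WittVector p A) ^ j * (WittVector.teichmuller p (w.coeff j)) ^ p ^ (n - 1 - j)
      ∈ K p A n := by
    rw [← Finset.sum_sub_distrib]
    apply Ideal.sum_mem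
    intro j hj
    rw [Finset.mem_range] at hj
    have hbase : wittEps p m k (G j) - WittVector.teichmuller p (w.coeff j) ∈ K p A 1 := by
      rw [mem_K]
      intro i hi
      interval_cases i
      have : ((wittEps p m k (G j) - WittVector.teichmuller p (w.coeff j)) : WittVector p A).coeff 0
          = WittVector.constantCoeff (wittEps p m k (G j) - WittVector.teichmuller p (w.coeff j)) :=
        rfl
      rw [this, map_sub, constantCoeff_wittEps, hG j hj, WittVector.constantCoeff_apply,
        WittVector.teichmuller_coeff_zero, sub_self]
    have hpow := pow_pow_sub_mem hbase (n - 1 - j)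
    have hterm := p_pow_mul_mem hpow j
    have harith : n - 1 - j + 1 + j = n := by omega
    rw [harith, mul_sub] at hterm
    exact hterm
  rw [h1]
  have h6 := Ideal.sub_mem _ h5 h4
  rwa [sub_sub_sub_cancel_right] at h6


theorem stmt12 (p m n : ℕ) [Fact p.Prime] (hm : 1 ≤ m) (hn : 1 ≤ n)
    (k : Type*) [CommRing k] [IsReduced k] [CharP k p]
    (w w' : WittVector p (MvPolynomial (Fin m) k))
    (G H : ℕ → MvPolynomial (Fin m) (WittVector p k))
    (hG : ∀ i < n, wittPi p m k (G i) = w.coeff i)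
    (hH : ∀ i < n, wittPi p m k (H i) = w'.coeff i)
    (r : ℕ → MvPolynomial (Fin m) k)
    (hr : ∃ y : WittVector p (MvPolynomial (Fin m) k),
      (⇑(WittVector.frobenius (p := p)))^[n - 1]
          (∑ i ∈ Finset.range n,
            (⇑(WittVector.verschiebung (p := p)))^[i] (WittVector.teichmuller p (r i)))
        - wittEps p m k
            ((∑ i ∈ Finset.range n,
                (p : MvPolynomial (Fin m) (WittVector p k)) ^ i * (G i) ^ p ^ (n - 1 - i))
              * ∑ i ∈ Finset.range n,
                  (p : MvPolynomial (Fin m) (WittVector p k)) ^ i * (H i) ^ p ^ (n - 1 - i))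
        = (⇑(WittVector.verschiebung (p := p)))^[n] y) :
    ∀ i < n, r i = (w * w').coeff i := by
  intro i hi
  haveI : IsReduced (MvPolynomial (Fin m) k) := mvReduced k m
  obtain ⟨y, hy⟩ := hr
  have h1 : (⇑(WittVector.frobenius (p := p)))^[n - 1]
          (∑ i ∈ Finset.range n,
            (⇑(WittVector.verschiebung (p := p)))^[i] (WittVector.teichmuller p (r i)))
        - wittEps p m k
            ((∑ i ∈ Finset.range n,
                (p : MvPolynomial (Fin m) (WittVector p k)) ^ i * (G i) ^ p ^ (n - 1 - i))
              * ∑ i ∈ Finset.range n,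
                  (p : MvPolynomial (Fin m) (WittVector p k)) ^ i * (H i) ^ p ^ (n - 1 - i))
      ∈ K p (MvPolynomial (Fin m) k) n := by
    rw [hy]; exact iterV_mem y n
  have hP := eps_claim p m n hn k w G hG
  have hQ := eps_claim p m n hn k w' H hH
  have key : wittEps p m k
            ((∑ i ∈ Finset.range n,
                (p : MvPolynomial (Fin m) (WittVector p k)) ^ i * (G i) ^ p ^ (n - 1 - i))
              * ∑ i ∈ Finset.range n,
                  (p : MvPolynomial (Fin m) (WittVector p k)) ^ i * (H i) ^ p ^ (n - 1 - i))
        - (⇑(WittVector.frobenius (p := p)))^[n - 1] (w * w')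
      = (wittEps p m k (∑ i ∈ Finset.range n,
            (p : MvPolynomial (Fin m) (WittVector p k)) ^ i * (G i) ^ p ^ (n - 1 - i))
          - (⇑(WittVector.frobenius (p := p)))^[n - 1] w)
        * wittEps p m k (∑ i ∈ Finset.range n,
            (p : MvPolynomial (Fin m) (WittVector p k)) ^ i * (H i) ^ p ^ (n - 1 - i))
        + (⇑(WittVector.frobenius (p := p)))^[n - 1] w
          * (wittEps p m k (∑ i ∈ Finset.range n,
                (p : MvPolynomial (Fin m) (WittVector p k)) ^ i * (H i) ^ p ^ (n - 1 - i))
            - (⇑(WittVector.frobenius (p := p)))^[n - 1] w') := by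
    rw [map_mul, iterate_map_mul]
    ring
  have hprod : wittEps p m k
            ((∑ i ∈ Finset.range n,
                (p : MvPolynomial (Fin m) (WittVector p k)) ^ i * (G i) ^ p ^ (n - 1 - i))
              * ∑ i ∈ Finset.range n,
                  (p : MvPolynomial (Fin m) (WittVector p k)) ^ i * (H i) ^ p ^ (n - 1 - i))
        - (⇑(WittVector.frobenius (p := p)))^[n - 1] (w * w')
      ∈ K p (MvPolynomial (Fin m) k) n := by
    rw [key]
    exact Ideal.add_mem _ (Ideal.mul_mem_right _ _ hP) (Ideal.mul_mem_left _ _ hQ)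
  have h2 := Ideal.add_mem _ h1 hprod
  rw [sub_add_sub_cancel, ← iterate_map_sub] at h2
  have h3 : (∑ i ∈ Finset.range n,
        (⇑(WittVector.verschiebung (p := p)))^[i] (WittVector.teichmuller p (r i)))
      - w * w' ∈ K p (MvPolynomial (Fin m) k) n := by
    rw [mem_K] at h2 ⊢
    intro j hj
    have h0 := h2 j hj
    rw [iterate_frobenius_coeff] at h0
    exact IsNilpotent.eq_zero ⟨p ^ (n - 1), h0⟩
  exact teich_sum_coeff n r (w * w') h3 i hi
end
end

section
/- (Correctness of the ghost-component algorithm for addition.) Let w, w′ ∈ W(k[X₁,…,Xₘ]) and let G₀,…,G_{n−1}, H₀,…,H_{n−1} ∈ W(k)[X₁,…,Xₘ] satisfy π(G_i) = w_i and π(H_i) = w′_i for every i ∈ {0,…,n−1}. Suppose R₀,…,R_{n−1} ∈ W(k)[X₁,…,Xₘ] satisfy, for every j ∈ {0,…,n−1}, the ghost-component equation Σ_{i=0}^{j} p^i R_i^{p^{j−i}} = Σ_{i=0}^{j} p^i G_i^{p^{j−i}} + Σ_{i=0}^{j} p^i H_i^{p^{j−i}}. Then π(R_i) = (w + w′)_i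 for every i ∈ {0,…,n−1}. -/
/-!
Since `k` is reduced of characteristic `p`, `W(k)` and hence `A = W(k)[X₁,…,Xₘ]` have no
`p`-torsion, so the first `n` ghost components of a Witt vector over `A` determine its first `n`
coordinates. The ghost equations therefore say that `Rᵢ` is the `i`-th coordinate of
`(Gᵢ)ᵢ + (Hᵢ)ᵢ` in `W(A)`; applying `W(π)` and using that the first `n` coordinates of a sum only
depend on the first `n` coordinates of the summands gives `π(Rᵢ) = (w + w')ᵢ`.
-/

noncomputable section

theorem IsSMulRegular.mvPolynomial {σ R S : Type*} [CommSemiring R] [SMulZeroClass S R] {a : S}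
    (ha : IsSMulRegular R a) : IsSMulRegular (MvPolynomial σ R) a :=
  fun _ _ h => MvPolynomial.ext _ _ fun d => ha <| by
    simpa only [MvPolynomial.coeff_smul] using congrArg (MvPolynomial.coeff d) h

namespace WittVector

variable {p : ℕ} [Fact p.Prime]

/-- In characteristic `p`, multiplication by `p` is `V ∘ F`; `V` is always injective, and
`F = W(Frob)` is injective because `k` is reduced. -/
theorem isSMulRegular_p (k : Type*) [CommRing k] [IsReduced k] [CharP k p] :
    IsSMulRegular (WittVector p k) p := by
  have hF : Function.Injective (frobenius : WittVector p k → WittVector p k) := by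
    rw [frobenius_eq_map_frobenius]
    exact map_injective _ (frobenius_inj k p)
  refine IsSMulRegular.of_right_eq_zero_of_smul fun x hx => ?_
  rwa [nsmul_eq_mul, mul_comm, ← verschiebung_frobenius,
    _root_.map_eq_zero_iff _ (verschiebung_injective p k), _root_.map_eq_zero_iff _ hF] at hx

theorem ghostComponent_eq_sum {A : Type*} [CommRing A] (x : WittVector p A) (n : ℕ) :
    ghostComponent n x = ∑ i ∈ Finset.range (n + 1), (p : A) ^ i * x.coeff i ^ p ^ (n - i) := by
  rw [ghostComponent_apply, aeval_wittPolynomial]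

theorem coeff_eq_of_ghostComponent_eq {A : Type*} [CommRing A] (hp : IsSMulRegular A p)
    {x y : WittVector p A} {n : ℕ} (h : ∀ i < n, ghostComponent i x = ghostComponent i y) :
    ∀ i < n, x.coeff i = y.coeff i := by
  induction n with
  | zero => intro i hi; omega
  | succ n ih =>
    have hlow := ih fun i hi => h i (by omega)
    intro i hi
    rcases Nat.lt_succ_iff_lt_or_eq.mp hi with hi | rfl
    · exact hlow i hi
    have hghost := h i (by omega)
    rw [ghostComponent_eq_sum, ghostComponent_eq_sum, Finset.sum_range_succ,
      Finset.sum_range_succ, Finset.sum_congr rfl fun j hj => by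
        rw [hlow j (Finset.mem_range.mp hj)], Nat.sub_self, pow_zero, pow_one, pow_one] at hghost
    apply hp.pow i
    simpa only [smul_eq_mul, nsmul_eq_mul, Nat.cast_pow] using add_left_cancel hghost

theorem coeff_add_eq_of_coeff_eq {R : Type*} [CommRing R] {x x' y y' : WittVector p R} {n : ℕ}
    (hx : ∀ i < n, x.coeff i = x'.coeff i) (hy : ∀ i < n, y.coeff i = y'.coeff i) :
    ∀ i < n, (x + y).coeff i = (x' + y').coeff i := by
  have htruncate {u v : WittVector p R} (h : ∀ i < n, u.coeff i = v.coeff i) :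
      truncate n u = truncate n v := by
    ext i
    simp only [coeff_truncate, h i i.isLt]
  intro i hi
  rw [← coeff_truncate (x + y) ⟨i, hi⟩, ← coeff_truncate (x' + y') ⟨i, hi⟩, map_add, map_add,
    htruncate hx, htruncate hy]

end WittVector

theorem stmt13_general (p m n : ℕ) [Fact p.Prime]
    (k : Type*) [CommRing k] [IsReduced k] [CharP k p]
    (w w' : WittVector p (MvPolynomial (Fin m) k))
    (G H R : ℕ → MvPolynomial (Fin m) (WittVector p k))
    (hG : ∀ i < n, wittPi p m k (G i) = w.coeff i)
    (hH : ∀ i < n, wittPi p m k (H i) = w'.coeff i)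
    (hR : ∀ j < n,
      ∑ i ∈ Finset.range (j + 1),
          (p : MvPolynomial (Fin m) (WittVector p k)) ^ i * (R i) ^ p ^ (j - i)
        = (∑ i ∈ Finset.range (j + 1),
              (p : MvPolynomial (Fin m) (WittVector p k)) ^ i * (G i) ^ p ^ (j - i))
            + ∑ i ∈ Finset.range (j + 1),
                (p : MvPolynomial (Fin m) (WittVector p k)) ^ i * (H i) ^ p ^ (j - i)) :
    ∀ i < n, wittPi p m k (R i) = (w + w').coeff i := by
  have hcoeff : ∀ i < n, R i = (WittVector.mk p G + WittVector.mk p H).coeff i := by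
    refine WittVector.coeff_eq_of_ghostComponent_eq
      (WittVector.isSMulRegular_p k).mvPolynomial fun j hj => ?_
    simpa only [WittVector.ghostComponent_eq_sum, map_add, WittVector.coeff_mk] using hR j hj
  intro i hi
  rw [hcoeff i hi, ← WittVector.map_coeff, map_add]
  exact WittVector.coeff_add_eq_of_coeff_eq
    (fun j hj => by rw [WittVector.map_coeff, WittVector.coeff_mk, hG j hj])
    (fun j hj => by rw [WittVector.map_coeff, WittVector.coeff_mk, hH j hj]) i hi

theorem stmt13 (p m n : ℕ) [Fact p.Prime] (hm : 1 ≤ m) (hn : 1 ≤ n)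
    (k : Type*) [CommRing k] [IsReduced k] [CharP k p]
    (w w' : WittVector p (MvPolynomial (Fin m) k))
    (G H R : ℕ → MvPolynomial (Fin m) (WittVector p k))
    (hG : ∀ i < n, wittPi p m k (G i) = w.coeff i)
    (hH : ∀ i < n, wittPi p m k (H i) = w'.coeff i)
    (hR : ∀ j < n,
      ∑ i ∈ Finset.range (j + 1),
          (p : MvPolynomial (Fin m) (WittVector p k)) ^ i * (R i) ^ p ^ (j - i)
        = (∑ i ∈ Finset.range (j + 1),
              (p : MvPolynomial (Fin m) (WittVector p k)) ^ i * (G i) ^ p ^ (j - i))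
            + ∑ i ∈ Finset.range (j + 1),
                (p : MvPolynomial (Fin m) (WittVector p k)) ^ i * (H i) ^ p ^ (j - i)) :
    ∀ i < n, wittPi p m k (R i) = (w + w').coeff i :=
  stmt13_general p m n k w w' G H R hG hH hR
end
end
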